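/- arXiv:1108.5741 — 12 statements merged into one kernel-verified Lean document; each statement's English description precedes it below -/
import Mathlib

section
/- Let n ≥ 0, let S be a left-handed skew Boolean algebra, let X be a Boolean space, and let μ : S → λ_n(X) be a proper homomorphism, i.e. μ preserves ∧, ∨, \ and 0 and for every g ∈ λ_n(X) there exists a ∈ S with g ∧ μ(a) = g. Then the map u : X → Λ_n(S) defined by u(x)(s) = μ(s)(x) is well defined (each u(x) is a nonzero homomorphism S → n+2), continuous and proper, and it is the unique continuous proper map X → Λ_n(S) satisfying u(x)(s) = μ(s)(x) for all x ∈ X and s ∈ S. -/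
open TopologicalSpace

namespace SkewPaper

/-- The meet operation of the primitive left-handed skew Boolean algebra `n+2` on
`{0,1,…,n+1}`: `x ∧ y = 0` if `x = 0` or `y = 0`, and `x ∧ y = x` otherwise. -/
def pw {n : ℕ} (x y : Fin (n+2)) : Fin (n+2) := if x = 0 ∨ y = 0 then 0 else x

/-- The join operation of `n+2`: `x ∨ y = x` if `y = 0`, and `x ∨ y = y` otherwise. -/
def pv {n : ℕ} (x y : Fin (n+2)) : Fin (n+2) := if y = 0 then x else y

/-- The relative complement of `n+2`: `x \ y = x` if `y = 0`, and `x \ y = 0` otherwise. -/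
def pd {n : ℕ} (x y : Fin (n+2)) : Fin (n+2) := if y = 0 then x else 0

/-- A left-handed skew Boolean algebra structure on `S`.  Membership of `y` in the principal
subalgebra `⌈x⌉ = {y : x∧y = y∧x = y}` is written out as the two equations
`wedge x y = y` and `wedge y x = y`. -/
structure SkewBA (S : Type*) where
  wedge : S → S → S
  vee : S → S → S
  sdiff : S → S → S
  zero : S
  wedge_assoc : ∀ x y z, wedge (wedge x y) z = wedge x (wedge y z)
  vee_assoc : ∀ x y z, vee (vee x y) z = vee x (vee y z)
  wedge_idem : ∀ x, wedge x x = x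
  vee_idem : ∀ x, vee x x = x
  absorb₁ : ∀ x y, wedge x (vee x y) = x
  absorb₂ : ∀ x y, vee x (wedge x y) = x
  absorb₃ : ∀ x y, wedge (vee y x) x = x
  absorb₄ : ∀ x y, vee (wedge y x) x = x
  left_wedge : ∀ x y, wedge (wedge x y) x = wedge x y
  left_vee : ∀ x y, vee (vee x y) x = vee y x
  symmetric : ∀ x y, wedge x y = wedge y x ↔ vee x y = vee y x
  wedge_zero : ∀ x, wedge x zero = zero
  zero_wedge : ∀ x, wedge zero x = zero
  /-- `⌈x⌉` is closed under `∧`. -/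
  princ_wedge_closed : ∀ x y z, wedge x y = y → wedge y x = y → wedge x z = z → wedge z x = z →
    wedge x (wedge y z) = wedge y z ∧ wedge (wedge y z) x = wedge y z
  /-- `⌈x⌉` is closed under `∨`. -/
  princ_vee_closed : ∀ x y z, wedge x y = y → wedge y x = y → wedge x z = z → wedge z x = z →
    wedge x (vee y z) = vee y z ∧ wedge (vee y z) x = vee y z
  /-- `∧` is commutative on `⌈x⌉` (with `∨` commutative as well, by `symmetric`),
  so `⌈x⌉` is a lattice with bottom `0` and top `x`. -/
  princ_comm : ∀ x y z, wedge x y = y → wedge y x = y → wedge x z = z → wedge z x = z →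
    wedge y z = wedge z y
  /-- The lattice `⌈x⌉` is distributive. -/
  princ_distrib : ∀ x a b c, wedge x a = a → wedge a x = a → wedge x b = b → wedge b x = b →
    wedge x c = c → wedge c x = c → wedge a (vee b c) = vee (wedge a b) (wedge a c)
  /-- `x \ y` lies in `⌈x⌉`. -/
  sdiff_mem : ∀ x y, wedge x (sdiff x y) = sdiff x y ∧ wedge (sdiff x y) x = sdiff x y
  /-- `x \ y` is a complement of `x ∧ y` in `⌈x⌉`: their meet is `0` … -/
  sdiff_compl_bot : ∀ x y, wedge (wedge x y) (sdiff x y) = zero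
  /-- … and their join is `x`. -/
  sdiff_compl_top : ∀ x y, vee (wedge x y) (sdiff x y) = x

/-- `h : S → {0,…,n+1}` is a homomorphism to the primitive algebra `n+2`. -/
def IsHomTo {S : Type*} (n : ℕ) (A : SkewBA S) (h : S → Fin (n+2)) : Prop :=
  (∀ x y, h (A.wedge x y) = pw (h x) (h y)) ∧
  (∀ x y, h (A.vee x y) = pv (h x) (h y)) ∧
  (∀ x y, h (A.sdiff x y) = pd (h x) (h y)) ∧
  h A.zero = 0

/-- `Λ_n(S)`: the nonzero homomorphisms `S → n+2`, topologized as a subspace of the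
product space `{0,…,n+1}^S` (each factor discrete). -/
abbrev Lambda {S : Type*} (n : ℕ) (A : SkewBA S) : Type _ :=
  {h : S → Fin (n+2) // IsHomTo n A h ∧ ∃ s, h s ≠ 0}

/-- Membership in `λ_n(X)`: `f` is continuous and `f⁻¹(i)` is compact for `i ∈ {1,…,n+1}`. -/
def MemLam (n : ℕ) {X : Type*} [TopologicalSpace X] (f : X → Fin (n+2)) : Prop :=
  Continuous f ∧ ∀ i : Fin (n+2), i ≠ 0 → IsCompact (f ⁻¹' {i})

/-- `λ_n(X)` as a type. -/
abbrev Lam (n : ℕ) (X : Type*) [TopologicalSpace X] : Type _ :=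
  {f : X → Fin (n+2) // MemLam n f}

/-- A Boolean space: Hausdorff, and the compact open sets form a base of the topology. -/
def IsBooleanSpace (X : Type*) [TopologicalSpace X] : Prop :=
  T2Space X ∧ IsTopologicalBasis {U : Set X | IsCompact U ∧ IsOpen U}

/-- A map is proper if preimages of compact sets are compact. -/
def PreimageCompact {X Y : Type*} [TopologicalSpace X] [TopologicalSpace Y] (g : X → Y) : Prop :=
  ∀ K : Set Y, IsCompact K → IsCompact (g ⁻¹' K)


/-- given a proper homomorphism `μ : S → λ_n(X)`, the map
`u : X → Λ_n(S)`, `u(x)(s) = μ(s)(x)`, is well defined, continuous and proper, and is the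
unique continuous proper map with this property. -/
theorem stmt0 (n : ℕ) {S X : Type*} [TopologicalSpace X] (A : SkewBA S)
    (hX : IsBooleanSpace X) (μ : S → X → Fin (n+2))
    (hmem : ∀ s, MemLam n (μ s))
    (hw : ∀ a b, μ (A.wedge a b) = fun x => pw (μ a x) (μ b x))
    (hv : ∀ a b, μ (A.vee a b) = fun x => pv (μ a x) (μ b x))
    (hd : ∀ a b, μ (A.sdiff a b) = fun x => pd (μ a x) (μ b x))
    (hz : μ A.zero = fun _ => 0)
    (hproper : ∀ g : X → Fin (n+2), MemLam n g → ∃ a, (fun x => pw (g x) (μ a x)) = g) :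
    ∃ u : X → Lambda n A,
      (∀ x s, (u x).1 s = μ s x) ∧ Continuous u ∧ PreimageCompact u ∧
      ∀ v : X → Lambda n A, Continuous v → PreimageCompact v →
        (∀ x s, (v x).1 s = μ s x) → v = u := by
  classical
  -- well definedness: each `fun s => μ s x` is a nonzero homomorphism
  have hhom : ∀ x : X, IsHomTo n A (fun s => μ s x) := by
    intro x
    refine ⟨fun a b => congrFun (hw a b) x, fun a b => congrFun (hv a b) x,
      fun a b => congrFun (hd a b) x, congrFun hz x⟩
  have hnz : ∀ x : X, ∃ s, μ s x ≠ 0 := by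
    intro x
    -- pick a compact open set `U` containing `x`
    obtain ⟨U, hU, hxU, -⟩ :=
      hX.2.exists_subset_of_mem_open (Set.mem_univ x) isOpen_univ
    haveI := hX.1
    have h10 : (1 : Fin (n+2)) ≠ 0 := by simp [Fin.ext_iff]
    have hUco : IsClopen U := ⟨hU.1.isClosed, hU.2⟩
    -- indicator function of `U` with value 1
    set g : X → Fin (n+2) := U.piecewise (fun _ => 1) (fun _ => 0) with hg
    have hgmem : MemLam n g := by
      constructor
      · refine continuous_const.piecewise ?_ continuous_const
        intro a ha
        rw [hUco.frontier_eq] at ha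
        exact absurd ha (Set.notMem_empty a)
      · intro i hi
        by_cases h1 : i = 1
        · have : g ⁻¹' {i} = U := by
            ext y
            simp only [Set.mem_preimage, Set.mem_singleton_iff, hg, Set.piecewise]
            by_cases hy : y ∈ U <;> simp [hy, h1]
          rw [this]; exact hU.1
        · have : g ⁻¹' {i} = ∅ := by
            ext y
            simp only [Set.mem_preimage, Set.mem_singleton_iff, hg, Set.piecewise,
              Set.mem_empty_iff_false, iff_false]
            by_cases hy : y ∈ U <;> simp [hy]
            · exact fun h => h1 h.symm
            · exact fun h => hi h.symm
          rw [this]; exact isCompact_empty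
    obtain ⟨a, ha⟩ := hproper g hgmem
    refine ⟨a, fun h0 => ?_⟩
    have hgx : g x = 1 := by simp [hg, Set.piecewise, hxU]
    have := congrFun ha x
    rw [hgx] at this
    simp only [pw, h0, or_true, if_true] at this
    exact h10 this.symm
  refine ⟨fun x => ⟨fun s => μ s x, hhom x, hnz x⟩, fun x s => rfl, ?_, ?_, ?_⟩
  · -- continuity
    exact Continuous.subtype_mk (continuous_pi fun s => (hmem s).1) _
  · -- properness
    intro K hK
    set u : X → Lambda n A := fun x => ⟨fun s => μ s x, hhom x, hnz x⟩ with hu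
    have hucont : Continuous u :=
      Continuous.subtype_mk (continuous_pi fun s => (hmem s).1) _
    -- cover K by basic open sets {h | h s = i}, i ≠ 0
    set V : S × {i : Fin (n+2) // i ≠ 0} → Set (Lambda n A) :=
      fun p => {h | h.1 p.1 = p.2.1} with hV
    have hVopen : ∀ p, IsOpen (V p) := by
      intro p
      have : V p = (fun h : Lambda n A => h.1 p.1) ⁻¹' {p.2.1} := rfl
      rw [this]
      exact ((continuous_apply p.1).comp continuous_subtype_val).isOpen_preimage _
        (isOpen_discrete _)
    have hKcov : K ⊆ ⋃ p, V p := by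
      intro h hh
      obtain ⟨s, hs⟩ := h.2.2
      exact Set.mem_iUnion.mpr ⟨⟨s, ⟨h.1 s, hs⟩⟩, rfl⟩
    obtain ⟨t, ht⟩ := hK.elim_finite_subcover V hVopen hKcov
    have hsub : u ⁻¹' K ⊆ ⋃ p ∈ t, μ p.1 ⁻¹' {p.2.1} := by
      intro x hx
      have := ht hx
      obtain ⟨p, hp, hxp⟩ := Set.mem_iUnion₂.mp this
      exact Set.mem_iUnion₂.mpr ⟨p, hp, hxp⟩
    have hC : IsCompact (⋃ p ∈ t, μ p.1 ⁻¹' {p.2.1}) :=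
      t.finite_toSet.isCompact_biUnion fun p _ => (hmem p.1).2 p.2.1 p.2.2
    have hclosed : IsClosed (u ⁻¹' K) := (hK.isClosed).preimage hucont
    have : u ⁻¹' K = (⋃ p ∈ t, μ p.1 ⁻¹' {p.2.1}) ∩ u ⁻¹' K :=
      (Set.inter_eq_self_of_subset_right hsub).symm
    rw [this]
    exact hC.inter_right hclosed
  · -- uniqueness
    intro v _ _ hvs
    funext x
    exact Subtype.ext (funext fun s => hvs x s)

end SkewPaper
end

section
/- Let n ≥ 1 and let S be a left-handed skew Boolean algebra. For any a, b ∈ S with a ≠ b there exists a nonzero homomorphism g : S → n+2 such that g(a) ≠ g(b); equivalently, the map η_S : S → λ_n(Λ_n(S)) given by η_S(a)(g) = g(a) is injective. -/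
open TopologicalSpace

namespace SkewPaper

section Dev

variable {S : Type*} (A : SkewBA S)

local infixl:70 " ⋏ " => A.wedge
local infixl:65 " ⋎ " => A.vee

lemma ww (x y : S) : x ⋏ (x ⋏ y) = x ⋏ y := by rw [← A.wedge_assoc, A.wedge_idem]

lemma wwr (x y : S) : (x ⋏ y) ⋏ y = x ⋏ y := by rw [A.wedge_assoc, A.wedge_idem]

lemma labs (x y : S) : y ⋏ (x ⋎ y) = y := by
  have h1 : (x ⋎ y) ⋏ y = y := A.absorb₃ y x
  calc y ⋏ (x ⋎ y) = (y ⋏ (x ⋎ y)) ⋏ y := (A.left_wedge y (x ⋎ y)).symm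
    _ = y ⋏ ((x ⋎ y) ⋏ y) := A.wedge_assoc ..
    _ = y := by rw [h1, A.wedge_idem]

lemma vz (x : S) : x ⋎ A.zero = x := by
  have := A.absorb₂ x A.zero; rwa [A.wedge_zero] at this

lemma zv (x : S) : A.zero ⋎ x = x := by
  have := A.absorb₄ x A.zero; rwa [A.zero_wedge] at this

lemma wnorm (x y z : S) : (x ⋏ y) ⋏ z = (x ⋏ z) ⋏ y := by
  have h := A.princ_comm x (x ⋏ y) (x ⋏ z) (ww A x y) (A.left_wedge x y)
    (ww A x z) (A.left_wedge x z)
  have e1 : (x ⋏ y) ⋏ (x ⋏ z) = (x ⋏ y) ⋏ z := by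
    rw [← A.wedge_assoc, A.left_wedge]
  have e2 : (x ⋏ z) ⋏ (x ⋏ y) = (x ⋏ z) ⋏ y := by
    rw [← A.wedge_assoc, A.left_wedge]
  rw [← e1, h, e2]

lemma zl (x y : S) (h : x ⋏ y = A.zero) : y ⋏ x = A.zero := by
  calc y ⋏ x = (y ⋏ x) ⋏ (y ⋏ x) := (A.wedge_idem _).symm
    _ = y ⋏ ((x ⋏ y) ⋏ x) := by rw [A.wedge_assoc, ← A.wedge_assoc x y x]
    _ = A.zero := by rw [h, A.zero_wedge, A.wedge_zero]

lemma sd_x (x y : S) : (A.sdiff x y) ⋏ x = A.sdiff x y := (A.sdiff_mem x y).2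

lemma x_sd (x y : S) : x ⋏ A.sdiff x y = A.sdiff x y := (A.sdiff_mem x y).1

lemma sd_bot (x y : S) : (A.sdiff x y) ⋏ y = A.zero := by
  have h1 : (A.sdiff x y) ⋏ (x ⋏ y) = (A.sdiff x y) ⋏ y := by
    rw [← A.wedge_assoc, sd_x]
  have h2 : (A.sdiff x y) ⋏ (x ⋏ y) = (x ⋏ y) ⋏ (A.sdiff x y) :=
    A.princ_comm x _ _ (x_sd A x y) (sd_x A x y) (ww A x y) (A.left_wedge x y)
  rw [← h1, h2, A.sdiff_compl_bot]

lemma sdiff_loc (x y f : S) (h : y ⋏ f = A.zero) : x ⋏ f = (A.sdiff x y) ⋏ f := by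
  have hfy : f ⋏ y = A.zero := zl A y f h
  have m1 : x ⋏ (x ⋏ f) = x ⋏ f := ww A x f
  have m2 : (x ⋏ f) ⋏ x = x ⋏ f := A.left_wedge x f
  have hd := A.princ_distrib x (x ⋏ f) (x ⋏ y) (A.sdiff x y) m1 m2
    (ww A x y) (A.left_wedge x y) (x_sd A x y) (sd_x A x y)
  rw [A.sdiff_compl_top] at hd
  have e2 : (x ⋏ f) ⋏ (x ⋏ y) = A.zero := by
    rw [← A.wedge_assoc, m2, A.wedge_assoc, hfy, A.wedge_zero]
  rw [m2, e2, zv] at hd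
  have hc : (x ⋏ f) ⋏ (A.sdiff x y) = (A.sdiff x y) ⋏ (x ⋏ f) :=
    A.princ_comm x _ _ m1 m2 (x_sd A x y) (sd_x A x y)
  rw [hd, hc, ← A.wedge_assoc, sd_x]

lemma vee_sd (x y : S) : x ⋎ y = (A.sdiff x y) ⋎ y := by
  have t0 : (x ⋏ y) ⋏ ((A.sdiff x y) ⋎ y) = x ⋏ y := by
    calc (x ⋏ y) ⋏ ((A.sdiff x y) ⋎ y) = x ⋏ (y ⋏ ((A.sdiff x y) ⋎ y)) := A.wedge_assoc ..
      _ = x ⋏ y := by rw [labs]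
  calc x ⋎ y = ((x ⋏ y) ⋎ A.sdiff x y) ⋎ y := by rw [A.sdiff_compl_top]
    _ = (x ⋏ y) ⋎ (A.sdiff x y ⋎ y) := A.vee_assoc ..
    _ = ((x ⋏ y) ⋏ (A.sdiff x y ⋎ y)) ⋎ (A.sdiff x y ⋎ y) := by rw [t0]
    _ = A.sdiff x y ⋎ y := A.absorb₄ ..

lemma sd_comm (x y : S) : (A.sdiff x y) ⋎ y = y ⋎ (A.sdiff x y) := by
  apply (A.symmetric _ _).1
  rw [sd_bot, zl A _ _ (sd_bot A x y)]

lemma vee_sd' (x y : S) : x ⋎ y = y ⋎ (A.sdiff x y) := by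
  rw [vee_sd, sd_comm]

lemma sd0 (x y f : S) (h : y ⋏ f = A.zero) : (x ⋎ y) ⋏ f = x ⋏ f := by
  have hfy : f ⋏ y = A.zero := zl A y f h
  have hqy : (A.sdiff x y) ⋏ y = A.zero := sd_bot A x y
  have hyq : y ⋏ (A.sdiff x y) = A.zero := zl A _ _ hqy
  have hs : x ⋎ y = y ⋎ (A.sdiff x y) := vee_sd' A x y
  have hys1 : y ⋏ (y ⋎ A.sdiff x y) = y := A.absorb₁ ..
  have hys2 : (y ⋎ A.sdiff x y) ⋏ y = y := by
    rw [← sd_comm]; exact A.absorb₃ ..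
  have hqs1 : (A.sdiff x y) ⋏ (y ⋎ A.sdiff x y) = A.sdiff x y := labs ..
  have hqs2 : (y ⋎ A.sdiff x y) ⋏ (A.sdiff x y) = A.sdiff x y := A.absorb₃ ..
  have hms1 : (y ⋎ A.sdiff x y) ⋏ ((y ⋎ A.sdiff x y) ⋏ f) = (y ⋎ A.sdiff x y) ⋏ f := ww ..
  have hms2 : ((y ⋎ A.sdiff x y) ⋏ f) ⋏ (y ⋎ A.sdiff x y) = (y ⋎ A.sdiff x y) ⋏ f :=
    A.left_wedge ..
  have hd := A.princ_distrib (y ⋎ A.sdiff x y) ((y ⋎ A.sdiff x y) ⋏ f) y (A.sdiff x y)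
    hms1 hms2 hys2 hys1 hqs2 hqs1
  have hmy : ((y ⋎ A.sdiff x y) ⋏ f) ⋏ y = A.zero := by
    rw [A.wedge_assoc, hfy, A.wedge_zero]
  rw [hms2, hmy, zv] at hd
  have hcomm : ((y ⋎ A.sdiff x y) ⋏ f) ⋏ (A.sdiff x y)
      = (A.sdiff x y) ⋏ ((y ⋎ A.sdiff x y) ⋏ f) :=
    A.princ_comm (y ⋎ A.sdiff x y) _ _ hms1 hms2 hqs2 hqs1
  calc (x ⋎ y) ⋏ f = (y ⋎ A.sdiff x y) ⋏ f := by rw [hs]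
    _ = (A.sdiff x y) ⋏ ((y ⋎ A.sdiff x y) ⋏ f) := by conv_lhs => rw [hd, hcomm]
    _ = (A.sdiff x y) ⋏ f := by rw [← A.wedge_assoc, hqs1]
    _ = x ⋏ f := (sdiff_loc A x y f h).symm

lemma dlem (d y z : S) (h1 : d ⋏ y = A.zero) (h2 : d ⋏ z = A.zero) :
    d ⋏ (y ⋎ z) = A.zero := by
  have h2' : z ⋏ d = A.zero := zl A d z h2
  have h1' : y ⋏ d = A.zero := zl A d y h1
  have h := sd0 A y z d h2'
  rw [h1'] at h
  exact zl A _ _ h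

lemma d1 (x y z : S) : x ⋏ (y ⋎ z) = (x ⋏ y) ⋎ (x ⋏ z) := by
  -- memberships in ⌈x⌉
  have he1 : x ⋏ (x ⋏ (y ⋎ z)) = x ⋏ (y ⋎ z) := ww ..
  have he2 : (x ⋏ (y ⋎ z)) ⋏ x = x ⋏ (y ⋎ z) := A.left_wedge ..
  have hf := A.princ_vee_closed x (x ⋏ y) (x ⋏ z) (ww A x y) (A.left_wedge x y)
    (ww A x z) (A.left_wedge x z)
  -- Step A : e ⋏ f = f
  have hexy : (x ⋏ (y ⋎ z)) ⋏ (x ⋏ y) = x ⋏ y := by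
    have hc : (x ⋏ (y ⋎ z)) ⋏ (x ⋏ y) = (x ⋏ y) ⋏ (x ⋏ (y ⋎ z)) :=
      A.princ_comm x _ _ he1 he2 (ww A x y) (A.left_wedge x y)
    rw [hc, ← A.wedge_assoc, A.left_wedge, A.wedge_assoc, A.absorb₁]
  have hexz : (x ⋏ (y ⋎ z)) ⋏ (x ⋏ z) = x ⋏ z := by
    have hc : (x ⋏ (y ⋎ z)) ⋏ (x ⋏ z) = (x ⋏ z) ⋏ (x ⋏ (y ⋎ z)) :=
      A.princ_comm x _ _ he1 he2 (ww A x z) (A.left_wedge x z)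
    rw [hc, ← A.wedge_assoc, A.left_wedge, A.wedge_assoc, labs]
  have hef : (x ⋏ (y ⋎ z)) ⋏ ((x ⋏ y) ⋎ (x ⋏ z)) = (x ⋏ y) ⋎ (x ⋏ z) := by
    rw [A.princ_distrib x (x ⋏ (y ⋎ z)) (x ⋏ y) (x ⋏ z) he1 he2
      (ww A x y) (A.left_wedge x y) (ww A x z) (A.left_wedge x z), hexy, hexz]
  -- Step B : e = (x ⋏ y) ⋎ t
  have hdmem := A.princ_wedge_closed x (A.sdiff x y) (A.sdiff x z)
    (x_sd A x y) (sd_x A x y) (x_sd A x z) (sd_x A x z)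
  have hdy : ((A.sdiff x y) ⋏ (A.sdiff x z)) ⋏ y = A.zero := by
    rw [wnorm, sd_bot, A.zero_wedge]
  have hdz : ((A.sdiff x y) ⋏ (A.sdiff x z)) ⋏ z = A.zero := by
    rw [A.wedge_assoc, sd_bot, A.wedge_zero]
  have hde : (x ⋏ (y ⋎ z)) ⋏ ((A.sdiff x y) ⋏ (A.sdiff x z)) = A.zero := by
    have hc : (x ⋏ (y ⋎ z)) ⋏ ((A.sdiff x y) ⋏ (A.sdiff x z))
        = ((A.sdiff x y) ⋏ (A.sdiff x z)) ⋏ (x ⋏ (y ⋎ z)) :=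
      A.princ_comm x _ _ he1 he2 hdmem.1 hdmem.2
    rw [hc, ← A.wedge_assoc, hdmem.2]
    exact dlem A _ y z hdy hdz
  have hpmem := A.princ_wedge_closed x (x ⋏ (y ⋎ z)) (A.sdiff x y)
    he1 he2 (x_sd A x y) (sd_x A x y)
  have hp : (x ⋏ (y ⋎ z)) ⋏ (A.sdiff x y)
      = ((x ⋏ (y ⋎ z)) ⋏ (A.sdiff x y)) ⋏ (x ⋏ z) := by
    have hd := A.princ_distrib x ((x ⋏ (y ⋎ z)) ⋏ (A.sdiff x y)) (x ⋏ z) (A.sdiff x z)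
      hpmem.1 hpmem.2 (ww A x z) (A.left_wedge x z) (x_sd A x z) (sd_x A x z)
    rw [A.sdiff_compl_top, hpmem.2] at hd
    have hz0 : ((x ⋏ (y ⋎ z)) ⋏ (A.sdiff x y)) ⋏ (A.sdiff x z) = A.zero := by
      rw [A.wedge_assoc]; exact hde
    rw [hz0, vz] at hd
    exact hd
  have hexp : x ⋏ (y ⋎ z) = (x ⋏ y) ⋎ ((x ⋏ (y ⋎ z)) ⋏ (A.sdiff x y)) := by
    have hd := A.princ_distrib x (x ⋏ (y ⋎ z)) (x ⋏ y) (A.sdiff x y)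
      he1 he2 (ww A x y) (A.left_wedge x y) (x_sd A x y) (sd_x A x y)
    rw [A.sdiff_compl_top, he2, hexy] at hd
    exact hd
  -- Step C : f ⋏ e = e
  have htmem := A.princ_wedge_closed x ((x ⋏ (y ⋎ z)) ⋏ (A.sdiff x y)) (x ⋏ z)
    hpmem.1 hpmem.2 (ww A x z) (A.left_wedge x z)
  have htf : ((x ⋏ y) ⋎ (x ⋏ z)) ⋏ (((x ⋏ (y ⋎ z)) ⋏ (A.sdiff x y)) ⋏ (x ⋏ z))
      = ((x ⋏ (y ⋎ z)) ⋏ (A.sdiff x y)) ⋏ (x ⋏ z) := by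
    have hc1 : ((x ⋏ y) ⋎ (x ⋏ z)) ⋏ (((x ⋏ (y ⋎ z)) ⋏ (A.sdiff x y)) ⋏ (x ⋏ z))
        = (((x ⋏ (y ⋎ z)) ⋏ (A.sdiff x y)) ⋏ (x ⋏ z)) ⋏ ((x ⋏ y) ⋎ (x ⋏ z)) :=
      A.princ_comm x _ _ hf.1 hf.2 htmem.1 htmem.2
    have hd := A.princ_distrib x (((x ⋏ (y ⋎ z)) ⋏ (A.sdiff x y)) ⋏ (x ⋏ z)) (x ⋏ y) (x ⋏ z)
      htmem.1 htmem.2 (ww A x y) (A.left_wedge x y) (ww A x z) (A.left_wedge x z)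
    have htxz : (((x ⋏ (y ⋎ z)) ⋏ (A.sdiff x y)) ⋏ (x ⋏ z)) ⋏ (x ⋏ z)
        = ((x ⋏ (y ⋎ z)) ⋏ (A.sdiff x y)) ⋏ (x ⋏ z) := wwr ..
    have hc2 : (((x ⋏ (y ⋎ z)) ⋏ (A.sdiff x y)) ⋏ (x ⋏ z)) ⋏ (x ⋏ y)
        = (x ⋏ y) ⋏ (((x ⋏ (y ⋎ z)) ⋏ (A.sdiff x y)) ⋏ (x ⋏ z)) :=
      A.princ_comm x _ _ htmem.1 htmem.2 (ww A x y) (A.left_wedge x y)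
    rw [hc1, hd, htxz, hc2, A.absorb₄]
  have hfxy : ((x ⋏ y) ⋎ (x ⋏ z)) ⋏ (x ⋏ y) = x ⋏ y := by
    have hc : ((x ⋏ y) ⋎ (x ⋏ z)) ⋏ (x ⋏ y) = (x ⋏ y) ⋏ ((x ⋏ y) ⋎ (x ⋏ z)) :=
      A.princ_comm x _ _ hf.1 hf.2 (ww A x y) (A.left_wedge x y)
    rw [hc, A.absorb₁]
  have hfe : ((x ⋏ y) ⋎ (x ⋏ z)) ⋏ (x ⋏ (y ⋎ z)) = x ⋏ (y ⋎ z) := by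
    conv_lhs => rw [hexp, hp]
    rw [A.princ_distrib x ((x ⋏ y) ⋎ (x ⋏ z)) (x ⋏ y)
      (((x ⋏ (y ⋎ z)) ⋏ (A.sdiff x y)) ⋏ (x ⋏ z)) hf.1 hf.2
      (ww A x y) (A.left_wedge x y) htmem.1 htmem.2, hfxy, htf, ← hp]
    exact hexp.symm
  have hcfin : (x ⋏ (y ⋎ z)) ⋏ ((x ⋏ y) ⋎ (x ⋏ z))
      = ((x ⋏ y) ⋎ (x ⋏ z)) ⋏ (x ⋏ (y ⋎ z)) :=
    A.princ_comm x _ _ he1 he2 hf.1 hf.2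
  rw [← hef, hcfin, hfe]

def Fil (F : Set S) : Prop :=
  F.Nonempty ∧ (∀ x ∈ F, ∀ y, A.wedge x y = x → y ∈ F) ∧
    ∀ x ∈ F, ∀ y ∈ F, A.wedge x y ∈ F

lemma exists_filter (Z : Set S) (hZ0 : A.zero ∈ Z)
    (hZdown : ∀ z ∈ Z, ∀ w, w ⋏ z = w → w ∈ Z)
    (hZvee : ∀ u ∈ Z, ∀ v ∈ Z, u ⋎ v ∈ Z)
    (e : S) (he : ∀ f ∈ Z, e ⋏ f ≠ e) :
    ∃ F : Set S, Fil A F ∧ e ∈ F ∧ (∀ z ∈ Z, z ∉ F) ∧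
      (∀ x y, x ⋎ y ∈ F → x ∈ F ∨ y ∈ F) ∧
      (∀ y, y ∉ F → ∃ f ∈ F, f ⋏ y = A.zero) := by
  classical
  set P : Set (Set S) := {F | Fil A F ∧ e ∈ F ∧ ∀ z ∈ Z, z ∉ F} with hP
  have hP0 : {y | e ⋏ y = e} ∈ P := by
    refine ⟨⟨⟨e, A.wedge_idem e⟩, ?_, ?_⟩, A.wedge_idem e, ?_⟩
    · intro x hx y hxy
      show e ⋏ y = e
      calc e ⋏ y = (e ⋏ x) ⋏ y := by rw [hx]
        _ = e ⋏ (x ⋏ y) := A.wedge_assoc ..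
        _ = e := by rw [hxy, hx]
    · intro x hx y hy
      show e ⋏ (x ⋏ y) = e
      calc e ⋏ (x ⋏ y) = (e ⋏ x) ⋏ y := (A.wedge_assoc ..).symm
        _ = e := by rw [hx, hy]
    · intro z hz hez
      exact he z hz hez
  have hchain : ∀ c ⊆ P, IsChain (· ⊆ ·) c → c.Nonempty →
      ∃ ub ∈ P, ∀ s ∈ c, s ⊆ ub := by
    intro c hcP hc ⟨F0, hF0⟩
    refine ⟨⋃₀ c, ⟨⟨⟨e, F0, hF0, (hcP hF0).2.1⟩, ?_, ?_⟩, ⟨F0, hF0, (hcP hF0).2.1⟩, ?_⟩,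
      fun s hs => Set.subset_sUnion_of_mem hs⟩
    · rintro x ⟨F1, hF1, hx⟩ y hxy
      exact ⟨F1, hF1, (hcP hF1).1.2.1 x hx y hxy⟩
    · rintro x ⟨F1, hF1, hx⟩ y ⟨F2, hF2, hy⟩
      rcases hc.total hF1 hF2 with hsub | hsub
      · exact ⟨F2, hF2, (hcP hF2).1.2.2 x (hsub hx) y hy⟩
      · exact ⟨F1, hF1, (hcP hF1).1.2.2 x hx y (hsub hy)⟩
    · rintro z hz ⟨F1, hF1, hzF⟩
      exact (hcP hF1).2.2 z hz hzF
  obtain ⟨F, -, hmaxF⟩ := zorn_subset_nonempty P hchain _ hP0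
  obtain ⟨⟨hFne, hFup, hFmeet⟩, heF, hFdisj⟩ := hmaxF.prop
  -- key property from maximality
  have key : ∀ x, x ∉ F → ∃ f ∈ F, f ⋏ x ∈ Z := by
    intro x hx
    by_contra hcon
    push_neg at hcon
    set F' : Set S := {w | ∃ f ∈ F, (f ⋏ x) ⋏ w = f ⋏ x} with hF'
    have hFF' : F ⊆ F' := by
      intro f hf
      exact ⟨f, hf, A.left_wedge f x⟩
    have hxF' : x ∈ F' := by
      obtain ⟨f0, hf0⟩ := hFne
      exact ⟨f0, hf0, wwr A f0 x⟩
    have hF'P : F' ∈ P := by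
      refine ⟨⟨⟨x, hxF'⟩, ?_, ?_⟩, hFF' heF, ?_⟩
      · rintro w ⟨f, hf, hw⟩ w' hww'
        refine ⟨f, hf, ?_⟩
        calc (f ⋏ x) ⋏ w' = ((f ⋏ x) ⋏ w) ⋏ w' := by rw [hw]
          _ = (f ⋏ x) ⋏ (w ⋏ w') := A.wedge_assoc ..
          _ = (f ⋏ x) ⋏ w := by rw [hww']
          _ = f ⋏ x := hw
      · rintro w1 ⟨f1, hf1, hw1⟩ w2 ⟨f2, hf2, hw2⟩
        refine ⟨f1 ⋏ f2, hFmeet f1 hf1 f2 hf2, ?_⟩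
        have c1 : ((f1 ⋏ f2) ⋏ x) ⋏ (f1 ⋏ x) = (f1 ⋏ f2) ⋏ x := by
          rw [wnorm A f1 f2 x]
          exact A.left_wedge (f1 ⋏ x) f2
        have c2 : ((f1 ⋏ f2) ⋏ x) ⋏ (f2 ⋏ x) = (f1 ⋏ f2) ⋏ x := by
          rw [A.wedge_assoc f1 f2 x, A.wedge_assoc, A.wedge_idem]
        have d1' : ((f1 ⋏ f2) ⋏ x) ⋏ w1 = (f1 ⋏ f2) ⋏ x := by
          calc ((f1 ⋏ f2) ⋏ x) ⋏ w1 = (((f1 ⋏ f2) ⋏ x) ⋏ (f1 ⋏ x)) ⋏ w1 := by rw [c1]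
            _ = ((f1 ⋏ f2) ⋏ x) ⋏ ((f1 ⋏ x) ⋏ w1) := A.wedge_assoc ..
            _ = ((f1 ⋏ f2) ⋏ x) ⋏ (f1 ⋏ x) := by rw [hw1]
            _ = (f1 ⋏ f2) ⋏ x := c1
        calc ((f1 ⋏ f2) ⋏ x) ⋏ (w1 ⋏ w2) = (((f1 ⋏ f2) ⋏ x) ⋏ w1) ⋏ w2 :=
            (A.wedge_assoc ..).symm
          _ = (((f1 ⋏ f2) ⋏ x) ⋏ (f2 ⋏ x)) ⋏ w2 := by rw [d1', c2]
          _ = ((f1 ⋏ f2) ⋏ x) ⋏ ((f2 ⋏ x) ⋏ w2) := A.wedge_assoc ..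
          _ = ((f1 ⋏ f2) ⋏ x) ⋏ (f2 ⋏ x) := by rw [hw2]
          _ = (f1 ⋏ f2) ⋏ x := c2
      · rintro z hz ⟨f, hf, hfz⟩
        exact hcon f hf (hZdown z hz (f ⋏ x) hfz)
    have := hmaxF.2 hF'P hFF'
    exact hx (this hxF')
  have hprime : ∀ x y, x ⋎ y ∈ F → x ∈ F ∨ y ∈ F := by
    intro x y hxy
    by_contra hcon
    push_neg at hcon
    obtain ⟨f1, hf1, hf1x⟩ := key x hcon.1
    obtain ⟨f2, hf2, hf2y⟩ := key y hcon.2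
    have hfF : f1 ⋏ f2 ∈ F := hFmeet f1 hf1 f2 hf2
    have hx' : (f1 ⋏ f2) ⋏ x ∈ Z := by
      apply hZdown (f1 ⋏ x) hf1x
      rw [wnorm A f1 f2 x]
      exact A.left_wedge (f1 ⋏ x) f2
    have hy' : (f1 ⋏ f2) ⋏ y ∈ Z := by
      apply hZdown (f2 ⋏ y) hf2y
      rw [A.wedge_assoc f1 f2 y, A.wedge_assoc, A.wedge_idem]
    have hmem : (f1 ⋏ f2) ⋏ (x ⋎ y) ∈ F := hFmeet _ hfF _ hxy
    rw [d1] at hmem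
    exact hFdisj _ (hZvee _ hx' _ hy') hmem
  refine ⟨F, ⟨hFne, hFup, hFmeet⟩, heF, hFdisj, hprime, ?_⟩
  intro y hy
  have hsplit : (e ⋏ y) ⋎ (A.sdiff e y) ∈ F := by
    rw [A.sdiff_compl_top]; exact heF
  rcases hprime _ _ hsplit with h | h
  · exact absurd (hFup _ h y (wwr A e y)) hy
  · exact ⟨A.sdiff e y, h, sd_bot A e y⟩

lemma pw_ne {n : ℕ} (u v : Fin (n+2)) (hu : u ≠ 0) (hv : v ≠ 0) : pw u v = u := by
  simp [pw, hu, hv]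
lemma pw_zl {n : ℕ} (v : Fin (n+2)) : pw 0 v = 0 := by simp [pw]
lemma pw_zr {n : ℕ} (u : Fin (n+2)) : pw u 0 = 0 := by simp [pw]
lemma pv_z {n : ℕ} (u : Fin (n+2)) : pv u 0 = u := by simp [pv]
lemma pv_ne {n : ℕ} (u v : Fin (n+2)) (hv : v ≠ 0) : pv u v = v := by simp [pv, hv]
lemma pd_z {n : ℕ} (u : Fin (n+2)) : pd u 0 = u := by simp [pd]
lemma pd_ne {n : ℕ} (u v : Fin (n+2)) (hv : v ≠ 0) : pd u v = 0 := by simp [pd, hv]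

lemma hom_germ (n : ℕ) (F : Set S) (hFil : Fil A F) (hz : A.zero ∉ F)
    (hprime : ∀ x y, x ⋎ y ∈ F → x ∈ F ∨ y ∈ F)
    (hultra : ∀ y, y ∉ F → ∃ f ∈ F, f ⋏ y = A.zero)
    (a : S) (ha : a ∈ F) (one two : Fin (n+2)) (h1 : one ≠ 0) (h2 : two ≠ 0) :
    ∃ g : S → Fin (n+2), IsHomTo n A g ∧ g a = two ∧
      (∀ x ∈ F, (∀ f ∈ F, x ⋏ f ≠ a ⋏ f) → g x = one) ∧
      (∀ x, x ∉ F → g x = 0) := by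
  classical
  obtain ⟨hFne, hFup, hFmeet⟩ := hFil
  set sim : S → Prop := fun x => ∃ f ∈ F, x ⋏ f = a ⋏ f with hsim
  set g : S → Fin (n+2) := fun x => if sim x then two else if x ∈ F then one else 0 with hgdef
  have hg : ∀ x, g x = if sim x then two else if x ∈ F then one else 0 := fun _ => rfl
  have hsim_mem : ∀ x, sim x → x ∈ F := by
    rintro x ⟨f, hf, hxf⟩
    have haf : a ⋏ f ∈ F := hFmeet a ha f hf
    have hxfF : x ⋏ f ∈ F := by rw [hxf]; exact haf
    exact hFup _ hxfF x (A.left_wedge x f)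
  have haux : ∀ x y : S, (∃ f ∈ F, x ⋏ f = y ⋏ f) → sim y → sim x := by
    rintro x y ⟨f1, hf1, heq⟩ ⟨f2, hf2, hya⟩
    refine ⟨f1 ⋏ f2, hFmeet f1 hf1 f2 hf2, ?_⟩
    calc x ⋏ (f1 ⋏ f2) = (x ⋏ f1) ⋏ f2 := (A.wedge_assoc ..).symm
      _ = (y ⋏ f1) ⋏ f2 := by rw [heq]
      _ = (y ⋏ f2) ⋏ f1 := wnorm ..
      _ = (a ⋏ f2) ⋏ f1 := by rw [hya]
      _ = (a ⋏ f1) ⋏ f2 := wnorm ..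
      _ = a ⋏ (f1 ⋏ f2) := A.wedge_assoc ..
  have hiff : ∀ x y : S, (∃ f ∈ F, x ⋏ f = y ⋏ f) → (sim x ↔ sim y) := by
    rintro x y ⟨f, hf, heq⟩
    exact ⟨fun h => haux y x ⟨f, hf, heq.symm⟩ h, fun h => haux x y ⟨f, hf, heq⟩ h⟩
  have gne : ∀ x, x ∈ F → g x ≠ 0 := by
    intro x hx
    rw [hg]
    by_cases hs : sim x
    · rw [if_pos hs]; exact h2
    · rw [if_neg hs, if_pos hx]; exact h1
  have gzero : ∀ x, x ∉ F → g x = 0 := by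
    intro x hx
    rw [hg, if_neg (fun hs => hx (hsim_mem x hs)), if_neg hx]
  have gsame : ∀ x y : S, x ∈ F → y ∈ F → (sim x ↔ sim y) → g x = g y := by
    intro x y hx hy hxy
    rw [hg, hg]
    by_cases hs : sim x
    · rw [if_pos hs, if_pos (hxy.1 hs)]
    · rw [if_neg hs, if_neg (fun h => hs (hxy.2 h)), if_pos hx, if_pos hy]
  refine ⟨g, ⟨?_, ?_, ?_, ?_⟩, ?_, ?_, gzero⟩
  · -- wedge
    intro x y
    by_cases hx : x ∈ F
    · by_cases hy : y ∈ F
      · have hxyF : x ⋏ y ∈ F := hFmeet x hx y hy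
        rw [pw_ne _ _ (gne x hx) (gne y hy)]
        exact gsame _ _ hxyF hx (hiff _ _ ⟨y, hy, by rw [wwr]⟩)
      · have hxyF : x ⋏ y ∉ F := fun h => hy (hFup _ h y (wwr A x y))
        rw [gzero _ hy, pw_zr, gzero _ hxyF]
    · have hxyF : x ⋏ y ∉ F := fun h => hx (hFup _ h x (A.left_wedge x y))
      rw [gzero _ hx, pw_zl, gzero _ hxyF]
  · -- vee
    intro x y
    by_cases hy : y ∈ F
    · have hxyF : x ⋎ y ∈ F := hFup y hy _ (labs A x y)
      rw [pv_ne _ _ (gne y hy)]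
      exact gsame _ _ hxyF hy (hiff _ _ ⟨y, hy, by rw [A.absorb₃, A.wedge_idem]⟩)
    · rw [gzero _ hy, pv_z]
      by_cases hx : x ∈ F
      · have hxyF : x ⋎ y ∈ F := hFup x hx _ (A.absorb₁ x y)
        obtain ⟨f0, hf0, hf0y⟩ := hultra y hy
        have hyf0 : y ⋏ f0 = A.zero := zl A f0 y hf0y
        exact gsame _ _ hxyF hx (hiff _ _ ⟨f0, hf0, sd0 A x y f0 hyf0⟩)
      · have hxyF : x ⋎ y ∉ F := fun h => (hprime x y h).elim hx hy
        rw [gzero _ hx, gzero _ hxyF]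
  · -- sdiff
    intro x y
    by_cases hy : y ∈ F
    · have hsdF : A.sdiff x y ∉ F := by
        intro h
        have : (A.sdiff x y) ⋏ y ∈ F := hFmeet _ h y hy
        rw [sd_bot] at this
        exact hz this
      rw [pd_ne _ _ (gne y hy), gzero _ hsdF]
    · rw [gzero _ hy, pd_z]
      obtain ⟨f0, hf0, hf0y⟩ := hultra y hy
      have hyf0 : y ⋏ f0 = A.zero := zl A f0 y hf0y
      have hwit : (A.sdiff x y) ⋏ f0 = x ⋏ f0 := (sdiff_loc A x y f0 hyf0).symm
      by_cases hx : x ∈ F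
      · have hsdF : A.sdiff x y ∈ F := by
          have hxf0 : x ⋏ f0 ∈ F := hFmeet x hx f0 hf0
          rw [sdiff_loc A x y f0 hyf0] at hxf0
          exact hFup _ hxf0 _ (A.left_wedge (A.sdiff x y) f0)
        exact gsame _ _ hsdF hx (hiff _ _ ⟨f0, hf0, hwit⟩)
      · have hsdF : A.sdiff x y ∉ F := fun h => hx (hFup _ h x (sd_x A x y))
        rw [gzero _ hx, gzero _ hsdF]
  · -- zero
    apply gzero
    exact hz
  · -- g a = two
    rw [hg, if_pos ⟨a, ha, rfl⟩]
  · -- value one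
    intro x hx hne
    rw [hg, if_neg ?_, if_pos hx]
    rintro ⟨f, hf, heq⟩
    exact hne f hf heq

lemma sep_case1 (n : ℕ) (a b : S) (h : a ⋏ b ≠ a) (one two : Fin (n+2))
    (h1 : one ≠ 0) (h2 : two ≠ 0) :
    ∃ g : S → Fin (n+2), IsHomTo n A g ∧ g a = two ∧ g b = 0 := by
  have he0 : A.sdiff a b ≠ A.zero := by
    intro h0
    apply h
    have htop := A.sdiff_compl_top a b
    rw [h0, vz] at htop
    exact htop
  have hZdown : ∀ z ∈ ({A.zero} : Set S), ∀ w, w ⋏ z = w → w ∈ ({A.zero} : Set S) := by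
    intro z hz w hw
    rw [Set.mem_singleton_iff] at hz ⊢
    rw [hz, A.wedge_zero] at hw
    exact hw.symm
  have hZvee : ∀ u ∈ ({A.zero} : Set S), ∀ v ∈ ({A.zero} : Set S),
      u ⋎ v ∈ ({A.zero} : Set S) := by
    intro u hu v hv
    rw [Set.mem_singleton_iff] at hu hv ⊢
    rw [hu, hv, vz]
  have he : ∀ f ∈ ({A.zero} : Set S), (A.sdiff a b) ⋏ f ≠ A.sdiff a b := by
    intro f hf
    rw [Set.mem_singleton_iff] at hf
    rw [hf, A.wedge_zero]
    exact fun hc => he0 hc.symm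
  obtain ⟨F, hFil, heF, hdisj, hprime, hultra⟩ :=
    exists_filter A {A.zero} rfl hZdown hZvee (A.sdiff a b) he
  have hzF : A.zero ∉ F := hdisj _ rfl
  have haF : a ∈ F := hFil.2.1 _ heF a (sd_x A a b)
  have hbF : b ∉ F := by
    intro hb
    apply hzF
    rw [← sd_bot A a b]
    exact hFil.2.2 _ heF b hb
  obtain ⟨g, hhom, hga, -, hgz⟩ := hom_germ A n F hFil hzF hprime hultra a haF one two h1 h2
  exact ⟨g, hhom, hga, hgz b hbF⟩

lemma sep_case2 (n : ℕ) (a b : S) (hab : a ≠ b) (hD1 : a ⋏ b = a) (hD2 : b ⋏ a = b)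
    (one two : Fin (n+2)) (h1 : one ≠ 0) (h2 : two ≠ 0) :
    ∃ g : S → Fin (n+2), IsHomTo n A g ∧ g a = two ∧ g b = one := by
  set Z : Set S := {f | a ⋏ f = b ⋏ f} with hZ
  have hZ0 : A.zero ∈ Z := by
    show a ⋏ A.zero = b ⋏ A.zero
    rw [A.wedge_zero, A.wedge_zero]
  have hZdown : ∀ z ∈ Z, ∀ w, w ⋏ z = w → w ∈ Z := by
    intro z hz w hw
    have hz' : a ⋏ z = b ⋏ z := hz
    show a ⋏ w = b ⋏ w
    calc a ⋏ w = a ⋏ (w ⋏ z) := by rw [hw]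
      _ = (a ⋏ w) ⋏ z := (A.wedge_assoc ..).symm
      _ = (a ⋏ z) ⋏ w := wnorm ..
      _ = (b ⋏ z) ⋏ w := by rw [hz']
      _ = (b ⋏ w) ⋏ z := wnorm ..
      _ = b ⋏ (w ⋏ z) := A.wedge_assoc ..
      _ = b ⋏ w := by rw [hw]
  have hZvee : ∀ u ∈ Z, ∀ v ∈ Z, u ⋎ v ∈ Z := by
    intro u hu v hv
    have hu' : a ⋏ u = b ⋏ u := hu
    have hv' : a ⋏ v = b ⋏ v := hv
    show a ⋏ (u ⋎ v) = b ⋏ (u ⋎ v)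
    rw [d1, d1, hu', hv']
  have he : ∀ f ∈ Z, a ⋏ f ≠ a := by
    intro f hf hcon
    have hf' : a ⋏ f = b ⋏ f := hf
    apply hab
    calc a = a ⋏ f := hcon.symm
      _ = b ⋏ f := hf'
      _ = (b ⋏ a) ⋏ f := by rw [hD2]
      _ = b ⋏ (a ⋏ f) := A.wedge_assoc ..
      _ = b ⋏ a := by rw [hcon]
      _ = b := hD2
  obtain ⟨F, hFil, haF, hdisj, hprime, hultra⟩ := exists_filter A Z hZ0 hZdown hZvee a he
  have hzF : A.zero ∉ F := hdisj _ hZ0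
  obtain ⟨g, hhom, hga, hone, -⟩ := hom_germ A n F hFil hzF hprime hultra a haF one two h1 h2
  have hbF : b ∈ F := hFil.2.1 a haF b hD1
  refine ⟨g, hhom, hga, hone b hbF ?_⟩
  intro f hf heq
  exact hdisj f heq.symm hf

end Dev

/-- for `n ≥ 1`, points of `Λ_n(S)` separate elements of `S`; equivalently the
unit `η_S : S → λ_n(Λ_n(S))`, `η_S(a)(g) = g(a)`, is injective. -/
theorem stmt1 (n : ℕ) (hn : 1 ≤ n) {S : Type*} (A : SkewBA S) :
    (∀ a b : S, a ≠ b →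
      ∃ g : S → Fin (n+2), IsHomTo n A g ∧ (∃ s, g s ≠ 0) ∧ g a ≠ g b) ∧
    Function.Injective (fun (a : S) => fun g : Lambda n A => g.1 a) := by
  classical
  have h1v : (⟨1, by omega⟩ : Fin (n+2)) ≠ 0 := by simp [Fin.ext_iff]
  have h2v : (⟨2, by omega⟩ : Fin (n+2)) ≠ 0 := by simp [Fin.ext_iff]
  have h21 : (⟨2, by omega⟩ : Fin (n+2)) ≠ (⟨1, by omega⟩ : Fin (n+2)) := by
    simp [Fin.ext_iff]
  have main : ∀ a b : S, a ≠ b →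
      ∃ g : S → Fin (n+2), IsHomTo n A g ∧ (∃ s, g s ≠ 0) ∧ g a ≠ g b := by
    intro a b hab
    by_cases hD1 : A.wedge a b = a
    · by_cases hD2 : A.wedge b a = b
      · obtain ⟨g, hhom, hga, hgb⟩ :=
          sep_case2 A n a b hab hD1 hD2 ⟨1, by omega⟩ ⟨2, by omega⟩ h1v h2v
        refine ⟨g, hhom, ⟨a, by rw [hga]; exact h2v⟩, by rw [hga, hgb]; exact h21⟩
      · obtain ⟨g, hhom, hgb, hga⟩ :=
          sep_case1 A n b a hD2 ⟨1, by omega⟩ ⟨2, by omega⟩ h1v h2v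
        refine ⟨g, hhom, ⟨b, by rw [hgb]; exact h2v⟩, ?_⟩
        rw [hga, hgb]
        exact fun hc => h2v hc.symm
    · obtain ⟨g, hhom, hga, hgb⟩ :=
        sep_case1 A n a b hD1 ⟨1, by omega⟩ ⟨2, by omega⟩ h1v h2v
      refine ⟨g, hhom, ⟨a, by rw [hga]; exact h2v⟩, by rw [hga, hgb]; exact h2v⟩
  refine ⟨main, ?_⟩
  intro a b hab
  by_contra hne
  obtain ⟨g, hg, hnz, hgab⟩ := main a b hne
  exact hgab (congrFun hab (⟨g, hg, hnz⟩ : Lambda n A))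

end SkewPaper
end

section
/- Let n ≥ 0 and let S be a left-handed skew Boolean algebra. Then Λ_n(S), with its subspace topology inherited from the product space {0,1,…,n+1}^S, is a Boolean space: it is Hausdorff and its compact open subsets form a base of its topology. -/
open TopologicalSpace

namespace SkewPaper

lemma isClosed_binop_set (n : ℕ) {S : Type*} (m : S → S → S)
    (p : Fin (n+2) → Fin (n+2) → Fin (n+2)) :
    IsClosed {h : S → Fin (n+2) | ∀ x y, h (m x y) = p (h x) (h y)} := by
  have : {h : S → Fin (n+2) | ∀ x y, h (m x y) = p (h x) (h y)} =
      ⋂ x, ⋂ y, {h : S → Fin (n+2) | h (m x y) = p (h x) (h y)} := by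
    ext h; simp [Set.mem_iInter]
  rw [this]
  refine isClosed_iInter fun x => isClosed_iInter fun y => isClosed_eq (continuous_apply _) ?_
  have hp : Continuous (fun q : Fin (n+2) × Fin (n+2) => p q.1 q.2) :=
    continuous_of_discreteTopology
  have h2 : Continuous (fun h : S → Fin (n+2) => ((h x, h y) : Fin (n+2) × Fin (n+2))) :=
    (continuous_apply x).prodMk (continuous_apply y)
  exact hp.comp h2

lemma isClosed_homSet (n : ℕ) {S : Type*} (A : SkewBA S) :
    IsClosed {h : S → Fin (n+2) | IsHomTo n A h} := by
  have : {h : S → Fin (n+2) | IsHomTo n A h} =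
      {h : S → Fin (n+2) | ∀ x y, h (A.wedge x y) = pw (h x) (h y)} ∩
      ({h : S → Fin (n+2) | ∀ x y, h (A.vee x y) = pv (h x) (h y)} ∩
      ({h : S → Fin (n+2) | ∀ x y, h (A.sdiff x y) = pd (h x) (h y)} ∩
      {h : S → Fin (n+2) | h A.zero = 0})) := by
    ext h; simp [IsHomTo, and_assoc]
  rw [this]
  exact (isClosed_binop_set n A.wedge pw).inter <|
    (isClosed_binop_set n A.vee pv).inter <|
      (isClosed_binop_set n A.sdiff pd).inter <|
        isClosed_eq (continuous_apply _) continuous_const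

/-- `Λ_n(S)`, with the subspace topology inherited from the product space
`{0,…,n+1}^S`, is a Boolean space: Hausdorff with the compact open sets a base. -/
theorem stmt2 (n : ℕ) {S : Type*} (A : SkewBA S) :
    T2Space (Lambda n A) ∧
    IsTopologicalBasis {U : Set (Lambda n A) | IsCompact U ∧ IsOpen U} := by
  refine ⟨inferInstance, isTopologicalBasis_of_isOpen_of_nhds (fun U hU => hU.2) ?_⟩
  intro a U haU hU
  obtain ⟨W, hW, rfl⟩ := isOpen_induced_iff.mp hU
  have haW : (a : S → Fin (n+2)) ∈ W := haU
  obtain ⟨I, u, hu, hsub⟩ := isOpen_pi_iff.mp hW a.1 haW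
  obtain ⟨s₀, hs₀⟩ := a.2.2
  set J : Set S := (I : Set S) ∪ {s₀} with hJ
  have hJfin : J.Finite := I.finite_toSet.union (Set.finite_singleton _)
  set B : Set (S → Fin (n+2)) := J.pi (fun i => {a.1 i}) with hB
  have haB : a.1 ∈ B := fun i _ => rfl
  have hBopen : IsOpen B := isOpen_set_pi hJfin fun i _ => isOpen_discrete _
  have hBclosed : IsClosed B := isClosed_set_pi fun i _ => isClosed_discrete _
  have hBW : B ⊆ W := by
    refine fun h hh => hsub fun i hi => ?_
    have := hh i (Or.inl hi)
    simp only [Set.mem_singleton_iff] at this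
    rw [this]
    exact (hu i hi).2
  refine ⟨Subtype.val ⁻¹' B, ⟨?_, hBopen.preimage continuous_subtype_val⟩, haB,
    fun x hx => hBW hx⟩
  rw [Subtype.isCompact_iff, Set.image_preimage_eq_inter_range, Subtype.range_val_subtype]
  have key : B ∩ {h : S → Fin (n+2) | IsHomTo n A h ∧ ∃ s, h s ≠ 0} =
      B ∩ {h : S → Fin (n+2) | IsHomTo n A h} := by
    ext h
    simp only [Set.mem_inter_iff, Set.mem_setOf_eq, and_congr_right_iff]
    intro hh
    refine ⟨fun hp => hp.1, fun hp => ⟨hp, ⟨s₀, ?_⟩⟩⟩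
    have := hh s₀ (Or.inr rfl)
    simp only [Set.mem_singleton_iff] at this
    rw [this]; exact hs₀
  change IsCompact (B ∩ {h : S → Fin (n+2) | IsHomTo n A h ∧ ∃ s, h s ≠ 0})
  rw [key]
  exact (hBclosed.inter (isClosed_homSet n A)).isCompact

end SkewPaper
end

section
/- Let n ≥ 0 and let S be a left-handed skew Boolean algebra. For each a ∈ S define η_S(a) : Λ_n(S) → {0,1,…,n+1} by η_S(a)(g) = g(a). Then: (i) η_S(a) ∈ λ_n(Λ_n(S)) for every a ∈ S, i.e. η_S(a) is continuous and η_S(a)⁻¹(i) = L(a,i) is compact for each i ∈ {1,…,n+1}; (ii) the map η_S : S → λ_n(Λ_n(S)) preserves ∧, ∨, \ and 0; and (iii) η_S is proper: for every g ∈ λ_n(Λ_n(S)) there exists a ∈ S with g ∧ η_S(a) = g. -/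
open TopologicalSpace

namespace SkewPaper

lemma pw_cont {n : ℕ} : Continuous (fun p : Fin (n+2) × Fin (n+2) => pw p.1 p.2) :=
  continuous_of_discreteTopology

lemma pv_cont {n : ℕ} : Continuous (fun p : Fin (n+2) × Fin (n+2) => pv p.1 p.2) :=
  continuous_of_discreteTopology

lemma pd_cont {n : ℕ} : Continuous (fun p : Fin (n+2) × Fin (n+2) => pd p.1 p.2) :=
  continuous_of_discreteTopology

lemma cont_comp2 {n : ℕ} {S : Type*} (q : Fin (n+2) → Fin (n+2) → Fin (n+2)) (x y : S) :
    Continuous fun h : S → Fin (n+2) => q (h x) (h y) := by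
  have he : (fun h : S → Fin (n+2) => q (h x) (h y)) =
      (fun p : Fin (n+2) × Fin (n+2) => q p.1 p.2) ∘ (fun h => (h x, h y)) := rfl
  rw [he]
  exact continuous_of_discreteTopology.comp
    ((continuous_apply x).prodMk (continuous_apply y))

lemma isClosed_hom_set {n : ℕ} {S : Type*} (A : SkewBA S) (a : S) (i : Fin (n+2)) :
    IsClosed {h : S → Fin (n+2) | IsHomTo n A h ∧ h a = i} := by
  have h1 : {h : S → Fin (n+2) | IsHomTo n A h ∧ h a = i} =
      (⋂ x : S, ⋂ y : S, {h : S → Fin (n+2) | h (A.wedge x y) = pw (h x) (h y)}) ∩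
      (⋂ x : S, ⋂ y : S, {h : S → Fin (n+2) | h (A.vee x y) = pv (h x) (h y)}) ∩
      (⋂ x : S, ⋂ y : S, {h : S → Fin (n+2) | h (A.sdiff x y) = pd (h x) (h y)}) ∩
      {h : S → Fin (n+2) | h A.zero = 0} ∩ {h : S → Fin (n+2) | h a = i} := by
    ext h
    simp only [Set.mem_setOf_eq, Set.mem_inter_iff, Set.mem_iInter, IsHomTo]
    tauto
  rw [h1]
  refine IsClosed.inter (IsClosed.inter (IsClosed.inter (IsClosed.inter ?_ ?_) ?_) ?_) ?_
  · exact isClosed_iInter fun x => isClosed_iInter fun y =>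
      isClosed_eq (continuous_apply _) (cont_comp2 pw x y)
  · exact isClosed_iInter fun x => isClosed_iInter fun y =>
      isClosed_eq (continuous_apply _) (cont_comp2 pv x y)
  · exact isClosed_iInter fun x => isClosed_iInter fun y =>
      isClosed_eq (continuous_apply _) (cont_comp2 pd x y)
  · exact isClosed_eq (continuous_apply _) continuous_const
  · exact isClosed_eq (continuous_apply _) continuous_const

lemma hom_foldr {n : ℕ} {S : Type*} {A : SkewBA S} {h : S → Fin (n+2)}
    (hh : IsHomTo n A h) (l : List S) :
    h (l.foldr A.vee A.zero) = (l.map h).foldr pv 0 := by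
  induction l with
  | nil => exact hh.2.2.2
  | cons c l ih => simp [List.foldr, hh.2.1, ih]

lemma foldr_pv_ne_zero {n : ℕ} {l : List (Fin (n+2))} {x : Fin (n+2)}
    (hx : x ∈ l) (hx0 : x ≠ 0) : l.foldr pv 0 ≠ 0 := by
  induction l with
  | nil => simp at hx
  | cons c l ih =>
    simp only [List.foldr, pv]
    by_cases hr : l.foldr pv 0 = 0
    · simp only [hr, if_pos rfl]
      rcases List.mem_cons.1 hx with rfl | hm
      · exact hx0
      · exact absurd (ih hm) (not_not_intro hr)
    · simp [hr]

/-- (i) `η_S(a) = (g ↦ g(a))` belongs to `λ_n(Λ_n(S))` (it is continuous with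
compact fibres `L(a,i)` over `i ∈ {1,…,n+1}`); (ii) `η_S` preserves `∧`, `∨`, `\` and `0`;
(iii) `η_S` is proper. -/
theorem stmt3 (n : ℕ) {S : Type*} (A : SkewBA S) :
    (∀ a : S, MemLam n (fun g : Lambda n A => g.1 a)) ∧
    ((∀ a b : S, (fun g : Lambda n A => g.1 (A.wedge a b)) = fun g => pw (g.1 a) (g.1 b)) ∧
     (∀ a b : S, (fun g : Lambda n A => g.1 (A.vee a b)) = fun g => pv (g.1 a) (g.1 b)) ∧
     (∀ a b : S, (fun g : Lambda n A => g.1 (A.sdiff a b)) = fun g => pd (g.1 a) (g.1 b)) ∧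
     ((fun g : Lambda n A => g.1 A.zero) = fun _ => 0)) ∧
    (∀ G : Lambda n A → Fin (n+2), MemLam n G →
      ∃ a : S, (fun g => pw (G g) (g.1 a)) = G) := by
  refine ⟨?_, ⟨?_, ?_, ?_, ?_⟩, ?_⟩
  · -- (i)
    intro a
    constructor
    · exact (continuous_apply a).comp continuous_subtype_val
    · intro i hi
      rw [Topology.IsEmbedding.isCompact_iff Topology.IsEmbedding.subtypeVal]
      have himg : Subtype.val '' ((fun g : Lambda n A => g.1 a) ⁻¹' {i}) =
          {h : S → Fin (n+2) | IsHomTo n A h ∧ h a = i} := by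
        ext h
        constructor
        · rintro ⟨⟨g, hg, hne⟩, hpre, rfl⟩
          exact ⟨hg, hpre⟩
        · rintro ⟨hh, ha⟩
          exact ⟨⟨h, hh, ⟨a, ha ▸ hi⟩⟩, ha, rfl⟩
      rw [himg]
      exact (isClosed_hom_set A a i).isCompact
  · intro a b; funext g; exact g.2.1.1 a b
  · intro a b; funext g; exact g.2.1.2.1 a b
  · intro a b; funext g; exact g.2.1.2.2.1 a b
  · funext g; exact g.2.1.2.2.2
  · -- (iii)
    intro G hG
    set K : Set (Lambda n A) := ⋃ i : {i : Fin (n+2) // i ≠ 0}, G ⁻¹' {i.1} with hK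
    have hKc : IsCompact K := isCompact_iUnion fun i => hG.2 i.1 i.2
    have hU : ∀ s : S, IsOpen {g : Lambda n A | g.1 s ≠ 0} := by
      intro s
      have : {g : Lambda n A | g.1 s ≠ 0} =
          (fun g : Lambda n A => g.1 s) ⁻¹' ({0}ᶜ) := rfl
      rw [this]
      exact IsOpen.preimage ((continuous_apply s).comp continuous_subtype_val)
        (isOpen_discrete _)
    have hcov : K ⊆ ⋃ s : S, {g : Lambda n A | g.1 s ≠ 0} := by
      intro g _
      obtain ⟨s, hs⟩ := g.2.2
      exact Set.mem_iUnion.2 ⟨s, hs⟩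
    obtain ⟨t, ht⟩ := hKc.elim_finite_subcover _ hU hcov
    refine ⟨t.toList.foldr A.vee A.zero, funext fun g => ?_⟩
    by_cases hg0 : G g = 0
    · simp [pw, hg0]
    · have hgK : g ∈ K := Set.mem_iUnion.2 ⟨⟨G g, hg0⟩, rfl⟩
      obtain ⟨s, hst, hs⟩ := Set.mem_iUnion₂.1 (ht hgK)
      have ha : g.1 (t.toList.foldr A.vee A.zero) ≠ 0 := by
        rw [hom_foldr g.2.1]
        exact foldr_pv_ne_zero (List.mem_map.2 ⟨s, Finset.mem_toList.2 hst, rfl⟩) hs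
      simp [pw, hg0, ha]

end SkewPaper
end

section
/- Let n ≥ 0 and let S be a left-handed skew Boolean algebra. The sets L(s,i), where s runs through S and i ∈ {1,…,n+1}, form a subbase of the subspace topology on Λ_n(S); that is, the subspace topology on Λ_n(S) inherited from {0,1,…,n+1}^S coincides with the topology generated by the sets L(s,i), s ∈ S, i ∈ {1,…,n+1}. -/
open TopologicalSpace Topology

namespace SkewPaper

/-- the subspace topology on `Λ_n(S)` coincides with the topology generated by
the sets `L(s,i) = {f : f(s) = i}`, `s ∈ S`, `i ∈ {1,…,n+1}`. -/
theorem stmt4 (n : ℕ) {S : Type*} (A : SkewBA S) :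
    (inferInstance : TopologicalSpace (Lambda n A)) =
      TopologicalSpace.generateFrom
        {U : Set (Lambda n A) |
          ∃ (s : S) (i : Fin (n+2)), i ≠ 0 ∧ U = {f : Lambda n A | f.1 s = i}} := by
  have key : ∀ s : S, {f : Lambda n A | f.1 s = (0 : Fin (n+2))} =
      ⋃ t : S, ⋃ i : Fin (n+2), ⋃ _ : i ≠ 0,
        ({f : Lambda n A | f.1 t = i} ∩ {f : Lambda n A | f.1 (A.sdiff t s) = i}) := by
    intro s
    ext f
    simp only [Set.mem_preimage, Set.mem_singleton_iff, Set.mem_iUnion, Set.mem_inter_iff,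
      Set.mem_setOf_eq]
    constructor
    · intro h0
      obtain ⟨t, ht⟩ := f.2.2
      refine ⟨t, f.1 t, ht, rfl, ?_⟩
      rw [f.2.1.2.2.1 t s, h0, pd, if_pos rfl]
    · rintro ⟨t, i, hi, h1, h2⟩
      rw [f.2.1.2.2.1 t s, pd] at h2
      by_contra hs
      rw [if_neg hs] at h2
      exact hi h2.symm
  refine le_antisymm (le_generateFrom ?_) ?_
  · rintro U ⟨s, i, hi, rfl⟩
    have hc : Continuous (fun f : Lambda n A => f.1 s) :=
      (continuous_apply s).comp continuous_subtype_val
    exact hc.isOpen_preimage {i} (isOpen_discrete _)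
  · have hopen : ∀ (t : S) (i : Fin (n+2)),
        IsOpen[TopologicalSpace.generateFrom
          {U : Set (Lambda n A) |
            ∃ (s : S) (i : Fin (n+2)), i ≠ 0 ∧ U = {f : Lambda n A | f.1 s = i}}]
          {f : Lambda n A | f.1 t = i} := by
      intro t i
      letI : TopologicalSpace (Lambda n A) :=
        TopologicalSpace.generateFrom
          {U : Set (Lambda n A) |
            ∃ (s : S) (i : Fin (n+2)), i ≠ 0 ∧ U = {f : Lambda n A | f.1 s = i}}
      by_cases hi : i = 0
      · subst hi
        rw [key t]
        refine isOpen_iUnion fun u => isOpen_iUnion fun j => isOpen_iUnion fun hj =>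
          IsOpen.inter ?_ ?_
        · exact TopologicalSpace.GenerateOpen.basic _ ⟨u, j, hj, rfl⟩
        · exact TopologicalSpace.GenerateOpen.basic _ ⟨A.sdiff u t, j, hj, rfl⟩
      · exact TopologicalSpace.GenerateOpen.basic _ ⟨t, i, hi, rfl⟩
    rw [instTopologicalSpaceSubtype, Pi.topologicalSpace, induced_iInf]
    refine le_iInf fun s => ?_
    rw [induced_compose, ← isOpen_implies_isOpen_iff]
    rintro U ⟨V, -, rfl⟩
    letI : TopologicalSpace (Lambda n A) :=
      TopologicalSpace.generateFrom
        {U : Set (Lambda n A) |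
          ∃ (s : S) (i : Fin (n+2)), i ≠ 0 ∧ U = {f : Lambda n A | f.1 s = i}}
    rw [← Set.biUnion_preimage_singleton]
    refine isOpen_biUnion fun i _ => ?_
    exact hopen s i

end SkewPaper
end

section
/- Let n ≥ 0, let S be a left-handed skew Boolean algebra, let s ∈ S, and let f ∈ Λ_n(S) be a nonzero homomorphism S → n+2. Then f(s) = 0 if and only if there exists t ∈ S with t ∧ s = 0 and f(t) ≠ 0. -/
open TopologicalSpace

namespace SkewPaper

/-- for a nonzero homomorphism `f : S → n+2` and `s ∈ S`, `f(s) = 0` iff there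
exists `t ∈ S` with `t ∧ s = 0` and `f(t) ≠ 0`. -/
theorem stmt5 (n : ℕ) {S : Type*} (A : SkewBA S) (s : S)
    (f : S → Fin (n+2)) (hf : IsHomTo n A f) (hnz : ∃ t, f t ≠ 0) :
    f s = 0 ↔ ∃ t, A.wedge t s = A.zero ∧ f t ≠ 0 := by
  obtain ⟨hw, hv, hd, hz⟩ := hf
  constructor
  · intro hs
    obtain ⟨t0, ht0⟩ := hnz
    refine ⟨A.sdiff t0 s, ?_, ?_⟩
    · -- (t0 \ s) ∧ s = 0
      obtain ⟨h1, h2⟩ := A.sdiff_mem t0 s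
      have hms : A.wedge (A.wedge t0 s) t0 = A.wedge t0 s := A.left_wedge t0 s
      have hms' : A.wedge t0 (A.wedge t0 s) = A.wedge t0 s := by
        rw [← A.wedge_assoc, A.wedge_idem]
      have hcomm := A.princ_comm t0 (A.sdiff t0 s) (A.wedge t0 s) h1 h2 hms' hms
      calc A.wedge (A.sdiff t0 s) s
          = A.wedge (A.wedge (A.sdiff t0 s) t0) s := by rw [h2]
        _ = A.wedge (A.sdiff t0 s) (A.wedge t0 s) := A.wedge_assoc _ _ _
        _ = A.wedge (A.wedge t0 s) (A.sdiff t0 s) := hcomm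
        _ = A.zero := A.sdiff_compl_bot t0 s
    · rw [hd, hs]
      simpa [pd] using ht0
  · rintro ⟨t, hts, htne⟩
    by_contra hs
    have : f (A.wedge t s) = 0 := by rw [hts, hz]
    rw [hw, pw] at this
    simp [htne, hs] at this

end SkewPaper
end

section
/- Let n ≥ 0 and let h : S₁ → S₂ be a proper homomorphism of left-handed skew Boolean algebras. Then for every f ∈ Λ_n(S₂) the composite f∘h belongs to Λ_n(S₁) (i.e. f∘h is a nonzero homomorphism S₁ → n+2), and the map Λ_n(h) : Λ_n(S₂) → Λ_n(S₁), f ↦ f∘h, is continuous and proper; moreover (Λ_n(h))⁻¹(L(s,i)) = L(h(s),i) for all s ∈ S₁ and i ∈ {1,…,n+1}. -/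
open TopologicalSpace

namespace SkewPaper

lemma homSetClosed {S : Type*} (n : ℕ) (B : SkewBA S) :
    IsClosed {g : S → Fin (n+2) | IsHomTo n B g} := by
  have hcont : ∀ (op : Fin (n+2) → Fin (n+2) → Fin (n+2)) (x y : S),
      Continuous fun g : S → Fin (n+2) => op (g x) (g y) := by
    intro op x y
    have h1 : Continuous fun p : Fin (n+2) × Fin (n+2) => op p.1 p.2 :=
      continuous_of_discreteTopology
    have h2 : Continuous fun g : S → Fin (n+2) => (g x, g y) :=
      (continuous_apply (A := fun _ : S => Fin (n+2)) x).prodMk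
        (continuous_apply (A := fun _ : S => Fin (n+2)) y)
    exact h1.comp h2
  have : {g : S → Fin (n+2) | IsHomTo n B g} =
      (⋂ x, ⋂ y, {g : S → Fin (n+2) | g (B.wedge x y) = pw (g x) (g y)}) ∩
      ((⋂ x, ⋂ y, {g : S → Fin (n+2) | g (B.vee x y) = pv (g x) (g y)}) ∩
      ((⋂ x, ⋂ y, {g : S → Fin (n+2) | g (B.sdiff x y) = pd (g x) (g y)}) ∩
      {g : S → Fin (n+2) | g B.zero = 0})) := by
    ext g
    simp only [Set.mem_setOf_eq, Set.mem_inter_iff, Set.mem_iInter, IsHomTo]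
  rw [this]
  refine IsClosed.inter ?_ (IsClosed.inter ?_ (IsClosed.inter ?_ ?_))
  · exact isClosed_iInter fun x => isClosed_iInter fun y =>
      isClosed_eq (continuous_apply _) (hcont pw x y)
  · exact isClosed_iInter fun x => isClosed_iInter fun y =>
      isClosed_eq (continuous_apply _) (hcont pv x y)
  · exact isClosed_iInter fun x => isClosed_iInter fun y =>
      isClosed_eq (continuous_apply _) (hcont pd x y)
  · exact isClosed_eq (continuous_apply _) continuous_const

/-- a proper homomorphism `h : S₁ → S₂` induces, by `f ↦ f∘h`, a continuous
proper map `Λ_n(h) : Λ_n(S₂) → Λ_n(S₁)` with `(Λ_n(h))⁻¹(L(s,i)) = L(h(s),i)`. -/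
theorem stmt7 (n : ℕ) {S₁ S₂ : Type*} (A : SkewBA S₁) (B : SkewBA S₂)
    (h : S₁ → S₂)
    (hw : ∀ x y, h (A.wedge x y) = B.wedge (h x) (h y))
    (hv : ∀ x y, h (A.vee x y) = B.vee (h x) (h y))
    (hd : ∀ x y, h (A.sdiff x y) = B.sdiff (h x) (h y))
    (hz : h A.zero = B.zero)
    (hproper : ∀ b : S₂, ∃ a : S₁, B.wedge b (h a) = b) :
    (∀ f : S₂ → Fin (n+2), IsHomTo n B f → (∃ t, f t ≠ 0) →
      IsHomTo n A (f ∘ h) ∧ ∃ t, (f ∘ h) t ≠ 0) ∧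
    ∃ Λh : Lambda n B → Lambda n A,
      (∀ f, (Λh f).1 = f.1 ∘ h) ∧ Continuous Λh ∧ PreimageCompact Λh ∧
      ∀ (s : S₁) (i : Fin (n+2)), i ≠ 0 →
        Λh ⁻¹' {g : Lambda n A | g.1 s = i} = {f : Lambda n B | f.1 (h s) = i} := by
  have key : ∀ f : S₂ → Fin (n+2), IsHomTo n B f → (∃ t, f t ≠ 0) →
      IsHomTo n A (f ∘ h) ∧ ∃ t, (f ∘ h) t ≠ 0 := by
    intro f hf hnz
    refine ⟨⟨?_, ?_, ?_, ?_⟩, ?_⟩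
    · intro x y; simp [Function.comp, hw, hf.1]
    · intro x y; simp [Function.comp, hv, hf.2.1]
    · intro x y; simp [Function.comp, hd, hf.2.2.1]
    · simp [Function.comp, hz, hf.2.2.2]
    · obtain ⟨t, ht⟩ := hnz
      obtain ⟨a, ha⟩ := hproper t
      refine ⟨a, fun h0 => ht ?_⟩
      have hwt := hf.1 t (h a)
      rw [ha] at hwt
      simp only [Function.comp_apply] at h0
      rw [hwt, h0, pw]
      simp
  refine ⟨key, ⟨fun f => ⟨f.1 ∘ h, key f.1 f.2.1 f.2.2⟩, fun f => rfl, ?_, ?_, ?_⟩⟩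
  · exact Continuous.subtype_mk
      (continuous_pi fun s => (continuous_apply (h s)).comp
        (continuous_subtype_val : Continuous (Subtype.val : Lambda n B → _))) _
  · intro K hK
    set Φ : (S₂ → Fin (n+2)) → (S₁ → Fin (n+2)) := fun g => g ∘ h with hΦdef
    have hΦ : Continuous Φ := continuous_pi fun s => continuous_apply (h s)
    have hKimg : IsClosed ((Subtype.val : Lambda n A → _) '' K) :=
      (hK.image continuous_subtype_val).isClosed
    set C : Set (S₂ → Fin (n+2)) :=
      {g | IsHomTo n B g} ∩ Φ ⁻¹' (Subtype.val '' K) with hCdef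
    have hCclosed : IsClosed C := (homSetClosed n B).inter (hKimg.preimage hΦ)
    have hCcomp : IsCompact C := hCclosed.isCompact
    have hsub : C ⊆ Set.range (Subtype.val : Lambda n B → _) := by
      rintro g ⟨hg, k, hkK, hk⟩
      obtain ⟨s, hs⟩ := k.2.2
      refine ⟨⟨g, hg, h s, ?_⟩, rfl⟩
      rw [hk] at hs
      exact hs
    have heq : (fun f : Lambda n B => (⟨f.1 ∘ h, key f.1 f.2.1 f.2.2⟩ : Lambda n A)) ⁻¹' K
        = Subtype.val ⁻¹' C := by
      ext f
      simp only [Set.mem_preimage, hCdef, Set.mem_inter_iff, Set.mem_setOf_eq]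
      constructor
      · intro hf
        exact ⟨f.2.1, ⟨_, hf, rfl⟩⟩
      · rintro ⟨-, k, hkK, hk⟩
        have : (⟨f.1 ∘ h, key f.1 f.2.1 f.2.2⟩ : Lambda n A) = k := Subtype.ext hk.symm
        rwa [this]
    rw [heq, Topology.IsEmbedding.subtypeVal.isCompact_iff,
      Set.image_preimage_eq_of_subset hsub]
    exact hCcomp
  · intro s i _
    rfl

end SkewPaper
end

section
/- Let n ≥ 0 and let S be a left-handed skew Boolean algebra. For a nonzero homomorphism F : S → {0,1} (where {0,1} carries the operations of the algebra 2, the case n = 0 of n+2) and a ∈ S with F(a) = 1, set X_{a,F} = {b ∈ S : there exists c ∈ S with c ≤ a, c ≤ b and F(c) = 1}, where ≤ denotes the natural partial order. Then the assignment h ↦ (F_h, f_h) — where F_h : S → {0,1} is given by F_h(a) = 1 iff h(a) ≠ 0, and f_h is the map sending each set of the form X_{a,F_h} with F_h(a) = 1 to h(a) — is well defined and is a bijection between Λ_n(S) and the set of all pairs (F, f) in which F is a nonzero homomorphism S → {0,1} and f is a function from {X_{a,F} : a ∈ S, F(a) = 1} to {1,…,n+1}. -/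
open TopologicalSpace

namespace SkewPaper

/-- The natural partial order: `x ≤ y` iff `x∧y = y∧x = x`. -/
def natle {S : Type*} (A : SkewBA S) (x y : S) : Prop :=
  A.wedge x y = x ∧ A.wedge y x = x

/-- `X_{a,F} = {b ∈ S : ∃ c, c ≤ a, c ≤ b and F(c) = 1}`. -/
def Xset {S : Type*} (A : SkewBA S) (a : S) (F : S → Fin (0+2)) : Set S :=
  {b | ∃ c, natle A c a ∧ natle A c b ∧ F c = 1}


section Aux

variable {S : Type*} (A : SkewBA S)

/-! ### Basic facts about `pw`, `pv`, `pd` -/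

lemma pw_zero_left {n : ℕ} (y : Fin (n+2)) : pw 0 y = 0 := if_pos (Or.inl rfl)

lemma pw_zero_right {n : ℕ} (x : Fin (n+2)) : pw x 0 = 0 := if_pos (Or.inr rfl)

lemma pw_right {n : ℕ} {x y : Fin (n+2)} (hy : y ≠ 0) : pw x y = x := by
  unfold pw
  rcases eq_or_ne x 0 with hx | hx
  · simp [hx]
  · rw [if_neg]
    push_neg
    exact ⟨hx, hy⟩

lemma pv_zero {n : ℕ} (x : Fin (n+2)) : pv x 0 = x := if_pos rfl

lemma pv_ne_s8 {n : ℕ} {y : Fin (n+2)} (x : Fin (n+2)) (hy : y ≠ 0) : pv x y = y := if_neg hy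

lemma pd_zero {n : ℕ} (x : Fin (n+2)) : pd x 0 = x := if_pos rfl

lemma pd_ne_s8 {n : ℕ} {y : Fin (n+2)} (x : Fin (n+2)) (hy : y ≠ 0) : pd x y = 0 := if_neg hy

lemma fin2 : ∀ x : Fin (0+2), x = 0 ∨ x = 1 := by decide

/-! ### Basic order facts in a skew Boolean algebra -/

lemma natle_refl (x : S) : natle A x x := ⟨A.wedge_idem x, A.wedge_idem x⟩

lemma natle_trans {x y z : S} (h1 : natle A x y) (h2 : natle A y z) : natle A x z := by
  obtain ⟨a1, a2⟩ := h1
  obtain ⟨b1, b2⟩ := h2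
  constructor
  · conv_lhs => rw [← a1]
    rw [A.wedge_assoc, b1, a1]
  · conv_lhs => rw [← a2]
    rw [← A.wedge_assoc, b2, a2]

lemma wedge_le_left (x y : S) : natle A (A.wedge x y) x :=
  ⟨A.left_wedge x y, by rw [← A.wedge_assoc, A.wedge_idem]⟩

/-- Left normality: `a∧b∧c = a∧c∧b`. -/
lemma left_normal (a b c : S) : A.wedge (A.wedge a b) c = A.wedge (A.wedge a c) b := by
  have m1 : A.wedge a (A.wedge a b) = A.wedge a b := by rw [← A.wedge_assoc, A.wedge_idem]
  have m2 : A.wedge (A.wedge a b) a = A.wedge a b := A.left_wedge a b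
  have m3 : A.wedge a (A.wedge a c) = A.wedge a c := by rw [← A.wedge_assoc, A.wedge_idem]
  have m4 : A.wedge (A.wedge a c) a = A.wedge a c := A.left_wedge a c
  have h := A.princ_comm a (A.wedge a b) (A.wedge a c) m1 m2 m3 m4
  calc A.wedge (A.wedge a b) c = A.wedge (A.wedge (A.wedge a b) a) c := by rw [m2]
    _ = A.wedge (A.wedge a b) (A.wedge a c) := A.wedge_assoc _ _ _
    _ = A.wedge (A.wedge a c) (A.wedge a b) := h
    _ = A.wedge (A.wedge (A.wedge a c) a) b := (A.wedge_assoc _ _ _).symm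
    _ = A.wedge (A.wedge a c) b := by rw [m4]

lemma comm_of_le {a x y : S} (hx : natle A x a) (hy : natle A y a) :
    A.wedge x y = A.wedge y x := by
  calc A.wedge x y = A.wedge (A.wedge a x) y := by rw [hx.2]
    _ = A.wedge (A.wedge a y) x := left_normal A a x y
    _ = A.wedge y x := by rw [hy.2]

lemma wedge_le_right {a x y : S} (hx : natle A x a) (hy : natle A y a) :
    natle A (A.wedge x y) y := by
  have hc := comm_of_le A hx hy
  constructor
  · rw [A.wedge_assoc, A.wedge_idem]
  · rw [hc, ← A.wedge_assoc, A.wedge_idem]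

lemma vee_absorb_right (a b : S) : A.wedge a (A.vee b a) = a := by
  have h : A.vee a (A.vee b a) = A.vee b a := by
    rw [← A.vee_assoc]
    exact A.left_vee a b
  rw [← h]
  exact A.absorb₁ a (A.vee b a)

lemma le_vee_right (x y : S) : natle A y (A.vee x y) :=
  ⟨vee_absorb_right A y x, A.absorb₃ y x⟩

lemma le_vee_of {x y w : S} (hwx : natle A w x) (hc : A.wedge w y = A.wedge y w) :
    natle A w (A.vee x y) := by
  have hu1 : A.vee w y = A.vee y w := (A.symmetric w y).mp hc
  have hwu : natle A w (A.vee w y) :=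
    ⟨A.absorb₁ w y, by rw [hu1]; exact A.absorb₃ w y⟩
  have hxw : A.vee x w = x := by
    conv_lhs => rw [← hwx.2]
    exact A.absorb₂ x w
  have hxv : A.vee x (A.vee w y) = A.vee x y := by rw [← A.vee_assoc, hxw]
  have huv : natle A (A.vee w y) (A.vee x y) := by
    rw [← hxv]
    exact le_vee_right A x (A.vee w y)
  exact natle_trans A hwu huv

lemma sdiff_le (x y : S) : natle A (A.sdiff x y) x :=
  ⟨(A.sdiff_mem x y).2, (A.sdiff_mem x y).1⟩

lemma wedge_zero_symm {x y : S} (h : A.wedge x y = A.zero) : A.wedge y x = A.zero := by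
  calc A.wedge y x = A.wedge (A.wedge y x) (A.wedge y x) := (A.wedge_idem _).symm
    _ = A.wedge y (A.wedge (A.wedge x y) x) := by
        rw [A.wedge_assoc y x (A.wedge y x), ← A.wedge_assoc x y x]
    _ = A.zero := by rw [h, A.zero_wedge, A.wedge_zero]

lemma sdiff_wedge_zero (x y : S) : A.wedge (A.sdiff x y) y = A.zero := by
  calc A.wedge (A.sdiff x y) y
      = A.wedge (A.wedge (A.sdiff x y) x) y := by rw [(A.sdiff_mem x y).2]
    _ = A.wedge (A.sdiff x y) (A.wedge x y) := A.wedge_assoc _ _ _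
    _ = A.wedge (A.wedge x y) (A.sdiff x y) :=
        comm_of_le A (sdiff_le A x y) (wedge_le_left A x y)
    _ = A.zero := A.sdiff_compl_bot x y

lemma sdiff_le_vee (x y : S) : natle A (A.sdiff x y) (A.vee x y) := by
  have h1 := sdiff_wedge_zero A x y
  have h2 := wedge_zero_symm A h1
  exact le_vee_of A (sdiff_le A x y) (by rw [h1, h2])

/-! ### `Xset` facts -/

lemma mem_xset_self {F : S → Fin (0+2)} {a : S} (ha : F a = 1) : a ∈ Xset A a F :=
  ⟨a, natle_refl A a, natle_refl A a, ha⟩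

lemma xset_eq {F : S → Fin (0+2)} (hF : IsHomTo 0 A F) {a b c : S}
    (hca : natle A c a) (hcb : natle A c b) (hc : F c = 1) :
    Xset A a F = Xset A b F := by
  have key : ∀ a' b' c', natle A c' a' → natle A c' b' → F c' = 1 →
      Xset A a' F ⊆ Xset A b' F := by
    intro a' b' c' h1 h2 h3 d hd
    obtain ⟨e, hea, hed, he⟩ := hd
    refine ⟨A.wedge c' e, ?_, ?_, ?_⟩
    · exact natle_trans A (wedge_le_left A c' e) h2
    · exact natle_trans A (wedge_le_right A h1 hea) hed
    · rw [hF.1, h3, he]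
      decide
  exact Set.Subset.antisymm (key a b c hca hcb hc) (key b a c hcb hca hc)

/-! ### The map `F_h` -/

/-- `F_h : S → 2`. -/
def FF {n : ℕ} (h : S → Fin (n+2)) : S → Fin (0+2) :=
  fun a => if h a = 0 then 0 else 1

lemma FF_eq_zero {n : ℕ} {h : S → Fin (n+2)} {a : S} : FF h a = 0 ↔ h a = 0 := by
  unfold FF
  rcases eq_or_ne (h a) 0 with h0 | h0 <;> simp [h0]

lemma FF_eq_one {n : ℕ} {h : S → Fin (n+2)} {a : S} : FF h a = 1 ↔ h a ≠ 0 := by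
  unfold FF
  rcases eq_or_ne (h a) 0 with h0 | h0 <;> simp [h0]

lemma FF_hom {n : ℕ} {h : S → Fin (n+2)} (hh : IsHomTo n A h) : IsHomTo 0 A (FF h) := by
  obtain ⟨hw, hv, hd, h0⟩ := hh
  refine ⟨?_, ?_, ?_, ?_⟩
  · intro x y
    rcases eq_or_ne (h x) 0 with hx | hx <;> rcases eq_or_ne (h y) 0 with hy | hy <;>
      simp [FF, pw, hw x y, hx, hy]
  · intro x y
    rcases eq_or_ne (h x) 0 with hx | hx <;> rcases eq_or_ne (h y) 0 with hy | hy <;>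
      simp [FF, pv, hv x y, hx, hy]
  · intro x y
    rcases eq_or_ne (h x) 0 with hx | hx <;> rcases eq_or_ne (h y) 0 with hy | hy <;>
      simp [FF, pd, hd x y, hx, hy]
  · simp [FF, h0]

lemma hval_eq {n : ℕ} {h : S → Fin (n+2)} (hh : IsHomTo n A h) {a b : S}
    (ha : h a ≠ 0) (hb : h b ≠ 0) (hX : Xset A a (FF h) = Xset A b (FF h)) :
    h a = h b := by
  have hbb : b ∈ Xset A a (FF h) := by
    rw [hX]
    exact mem_xset_self A (FF_eq_one.mpr hb)
  obtain ⟨c, hca, hcb, hc⟩ := hbb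
  have hc' : h c ≠ 0 := FF_eq_one.mp hc
  have e1 : h c = pw (h a) (h c) := by rw [← hh.1, hca.2]
  have e2 : h c = pw (h b) (h c) := by rw [← hh.1, hcb.2]
  rw [pw_right hc'] at e1
  rw [pw_right hc'] at e2
  exact e1.symm.trans e2

/-! ### The forward and backward maps -/

variable (n : ℕ)

/-- The codomain type. -/
abbrev PT : Type _ :=
  (F : {F : S → Fin (0+2) // IsHomTo 0 A F ∧ ∃ a, F a ≠ 0}) ×
    ({U : Set S // ∃ a, F.1 a = 1 ∧ U = Xset A a F.1} → {i : Fin (n+2) // i ≠ 0})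

/-- The forward map `h ↦ (F_h, f_h)`. -/
noncomputable def Phi (h : Lambda n A) : PT A n :=
  ⟨⟨FF h.1, FF_hom A h.2.1, by
      obtain ⟨s, hs⟩ := h.2.2
      exact ⟨s, fun e => hs (FF_eq_zero.mp e)⟩⟩,
   fun U => ⟨h.1 U.2.choose, FF_eq_one.mp U.2.choose_spec.1⟩⟩

lemma Phi_f_eq (h : Lambda n A) {a : S} (ha : h.1 a ≠ 0)
    (U : {U : Set S // ∃ b, (Phi A n h).1.1 b = 1 ∧ U = Xset A b (Phi A n h).1.1})
    (hU : U.1 = Xset A a (FF h.1)) :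
    ((Phi A n h).2 U).1 = h.1 a := by
  have h1 : FF h.1 U.2.choose = 1 := U.2.choose_spec.1
  have h2 : U.1 = Xset A U.2.choose (FF h.1) := U.2.choose_spec.2
  exact hval_eq A h.2.1 (FF_eq_one.mp h1) ha (h2.symm.trans hU)

/-- The backward map. -/
noncomputable def mkH (P : PT A n) : S → Fin (n+2) :=
  fun a => if ha : P.1.1 a = 1 then (P.2 ⟨Xset A a P.1.1, a, ha, rfl⟩).1 else 0

lemma mkH_of_one (P : PT A n) {a : S} (ha : P.1.1 a = 1) :
    mkH A n P a = (P.2 ⟨Xset A a P.1.1, a, ha, rfl⟩).1 := dif_pos ha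

lemma mkH_of_zero (P : PT A n) {a : S} (ha : P.1.1 a = 0) : mkH A n P a = 0 :=
  dif_neg (by rw [ha]; decide)

lemma mkH_ne_zero (P : PT A n) {a : S} (ha : P.1.1 a = 1) : mkH A n P a ≠ 0 := by
  rw [mkH_of_one A n P ha]
  exact (P.2 _).2

lemma mkH_eq_of_xeq (P : PT A n) {a b : S} (ha : P.1.1 a = 1) (hb : P.1.1 b = 1)
    (hX : Xset A a P.1.1 = Xset A b P.1.1) : mkH A n P a = mkH A n P b := by
  rw [mkH_of_one A n P ha, mkH_of_one A n P hb]
  exact congrArg (fun W => (P.2 W).1) (Subtype.ext hX)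

lemma mkH_hom (P : PT A n) : IsHomTo n A (mkH A n P) := by
  have hF : IsHomTo 0 A P.1.1 := P.1.2.1
  refine ⟨?_, ?_, ?_, ?_⟩
  · intro x y
    have hw : P.1.1 (A.wedge x y) = pw (P.1.1 x) (P.1.1 y) := hF.1 x y
    rcases fin2 (P.1.1 x) with hx | hx
    · have h0 : P.1.1 (A.wedge x y) = 0 := by rw [hw, hx, pw_zero_left]
      rw [mkH_of_zero A n P h0, mkH_of_zero A n P hx, pw_zero_left]
    · rcases fin2 (P.1.1 y) with hy | hy
      · have h0 : P.1.1 (A.wedge x y) = 0 := by rw [hw, hy, pw_zero_right]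
        rw [mkH_of_zero A n P h0, mkH_of_zero A n P hy, pw_zero_right]
      · have h1 : P.1.1 (A.wedge x y) = 1 := by rw [hw, hx, hy]; decide
        rw [mkH_eq_of_xeq A n P h1 hx
            (xset_eq A hF (natle_refl A _) (wedge_le_left A x y) h1),
          pw_right (mkH_ne_zero A n P hy)]
  · intro x y
    have hv : P.1.1 (A.vee x y) = pv (P.1.1 x) (P.1.1 y) := hF.2.1 x y
    rcases fin2 (P.1.1 y) with hy | hy
    · rcases fin2 (P.1.1 x) with hx | hx
      · have h0 : P.1.1 (A.vee x y) = 0 := by rw [hv, hx, hy]; decide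
        rw [mkH_of_zero A n P h0, mkH_of_zero A n P hx, mkH_of_zero A n P hy, pv_zero]
      · have h1 : P.1.1 (A.vee x y) = 1 := by rw [hv, hx, hy]; decide
        have hc1 : P.1.1 (A.sdiff x y) = 1 := by
          rw [hF.2.2.1 x y, hx, hy]; decide
        rw [mkH_eq_of_xeq A n P h1 hx
            (xset_eq A hF (sdiff_le_vee A x y) (sdiff_le A x y) hc1),
          mkH_of_zero A n P hy, pv_zero]
    · have h1 : P.1.1 (A.vee x y) = 1 := by
        rw [hv, hy, pv_ne_s8 _ (by decide : (1 : Fin (0+2)) ≠ 0)]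
      rw [mkH_eq_of_xeq A n P h1 hy
          (xset_eq A hF (le_vee_right A x y) (natle_refl A y) hy),
        pv_ne_s8 _ (mkH_ne_zero A n P hy)]
  · intro x y
    have hd : P.1.1 (A.sdiff x y) = pd (P.1.1 x) (P.1.1 y) := hF.2.2.1 x y
    rcases fin2 (P.1.1 y) with hy | hy
    · rcases fin2 (P.1.1 x) with hx | hx
      · have h0 : P.1.1 (A.sdiff x y) = 0 := by rw [hd, hx, hy]; decide
        rw [mkH_of_zero A n P h0, mkH_of_zero A n P hx, mkH_of_zero A n P hy, pd_zero]
      · have h1 : P.1.1 (A.sdiff x y) = 1 := by rw [hd, hx, hy]; decide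
        rw [mkH_eq_of_xeq A n P h1 hx
            (xset_eq A hF (natle_refl A _) (sdiff_le A x y) h1),
          mkH_of_zero A n P hy, pd_zero]
    · have h0 : P.1.1 (A.sdiff x y) = 0 := by
        rw [hd, hy, pd_ne_s8 _ (by decide : (1 : Fin (0+2)) ≠ 0)]
      rw [mkH_of_zero A n P h0, pd_ne_s8 _ (mkH_ne_zero A n P hy)]
  · exact mkH_of_zero A n P hF.2.2.2

noncomputable def Psi (P : PT A n) : Lambda n A :=
  ⟨mkH A n P, mkH_hom A n P, by
    obtain ⟨a, ha⟩ := P.1.2.2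
    rcases fin2 (P.1.1 a) with h0 | h1
    · exact absurd h0 ha
    · exact ⟨a, mkH_ne_zero A n P h1⟩⟩

lemma left_inv : Function.LeftInverse (Psi A n) (Phi A n) := by
  intro h
  apply Subtype.ext
  funext a
  show mkH A n (Phi A n h) a = h.1 a
  rcases eq_or_ne (h.1 a) 0 with h0 | h0
  · rw [mkH_of_zero A n (Phi A n h) (show (Phi A n h).1.1 a = 0 from FF_eq_zero.mpr h0), h0]
  · have ha1 : (Phi A n h).1.1 a = 1 := FF_eq_one.mpr h0
    rw [mkH_of_one A n (Phi A n h) ha1]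
    exact Phi_f_eq A n h h0 _ rfl

theorem sigma_fun_ext {T R σ : Type*} {p : T → σ → Prop}
    (x y : Σ t : T, ({U : σ // p t U} → R))
    (h1 : x.1 = y.1)
    (h2 : ∀ (U : {U : σ // p x.1 U}) (V : {U : σ // p y.1 U}), U.1 = V.1 → x.2 U = y.2 V) :
    x = y := by
  obtain ⟨a, fa⟩ := x
  obtain ⟨b, fb⟩ := y
  dsimp at h1
  subst h1
  dsimp at h2
  exact congrArg (Sigma.mk a) (funext fun U => h2 U U rfl)

lemma right_inv : Function.RightInverse (Psi A n) (Phi A n) := by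
  intro P
  obtain ⟨F, f⟩ := P
  have hpt : ∀ a, FF (mkH A n ⟨F, f⟩) a = F.1 a := by
    intro a
    rcases fin2 (F.1 a) with h0 | h1
    · rw [h0]
      exact FF_eq_zero.mpr (mkH_of_zero A n ⟨F, f⟩ h0)
    · rw [h1]
      exact FF_eq_one.mpr (mkH_ne_zero A n ⟨F, f⟩ h1)
  have hFfun : FF (mkH A n ⟨F, f⟩) = F.1 := funext hpt
  have hE : (Phi A n (Psi A n ⟨F, f⟩)).1 = F := Subtype.ext hFfun
  refine sigma_fun_ext _ _ hE ?_
  intro U V hUV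
  obtain ⟨hc1', hcU⟩ := U.2.choose_spec
  have hc1 : F.1 U.2.choose = 1 := by rw [← hFfun]; exact hc1'
  apply Subtype.ext
  show mkH A n ⟨F, f⟩ U.2.choose = (f V).1
  rw [mkH_of_one A n ⟨F, f⟩ hc1]
  exact congrArg (fun W => (f W).1)
    (Subtype.ext (((congrArg (Xset A U.2.choose) hFfun).symm.trans hcU.symm).trans hUV))

end Aux

/-- the assignment `h ↦ (F_h, f_h)` — where `F_h(a) = 1` iff `h(a) ≠ 0` and
`f_h` sends `X_{a,F_h}` (for `F_h(a) = 1`) to `h(a)` — is well defined and is a bijection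
between `Λ_n(S)` and the pairs `(F, f)` with `F` a nonzero homomorphism `S → 2` and
`f : {X_{a,F} : F(a) = 1} → {1,…,n+1}`. -/
theorem stmt8 (n : ℕ) {S : Type*} (A : SkewBA S) :
    ∃ Φ : Lambda n A →
      (F : {F : S → Fin (0+2) // IsHomTo 0 A F ∧ ∃ a, F a ≠ 0}) ×
        ({U : Set S // ∃ a, F.1 a = 1 ∧ U = Xset A a F.1} → {i : Fin (n+2) // i ≠ 0}),
      Function.Bijective Φ ∧
      (∀ (h : Lambda n A) (a : S), (Φ h).1.1 a = 0 ↔ h.1 a = 0) ∧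
      (∀ (h : Lambda n A) (a : S) (ha : (Φ h).1.1 a = 1),
        ((Φ h).2 ⟨Xset A a (Φ h).1.1, a, ha, rfl⟩).1 = h.1 a) := by
  classical
  refine ⟨Phi A n, ?_, ?_, ?_⟩
  · exact Function.bijective_iff_has_inverse.mpr ⟨Psi A n, left_inv A n, right_inv A n⟩
  · intro h a
    exact FF_eq_zero
  · intro h a ha
    exact Phi_f_eq A n h (FF_eq_one.mp ha) _ rfl

end SkewPaper
end

section
/- Let n ≥ 0 and let X be a Boolean space. For each x ∈ X the evaluation map ε_X(x) : λ_n(X) → {0,1,…,n+1}, f ↦ f(x), is a nonzero homomorphism from λ_n(X) to n+2 (it preserves the pointwise operations ∧, ∨, \ and 0 and takes a nonzero value on some element of λ_n(X)); hence ε_X(x) ∈ Λ_n(λ_n(X)). Moreover, the map ε_X : X → Λ_n(λ_n(X)), x ↦ ε_X(x), is continuous and proper. -/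
open TopologicalSpace

namespace SkewPaper

/-- `φ : λ_n(X) → {0,…,n+1}` preserves the pointwise operations `∧`, `∨`, `\` and `0`. -/
def IsHomLam (n : ℕ) {X : Type*} [TopologicalSpace X] (φ : Lam n X → Fin (n+2)) : Prop :=
  (∀ f g h : Lam n X, (∀ y, h.1 y = pw (f.1 y) (g.1 y)) → φ h = pw (φ f) (φ g)) ∧
  (∀ f g h : Lam n X, (∀ y, h.1 y = pv (f.1 y) (g.1 y)) → φ h = pv (φ f) (φ g)) ∧
  (∀ f g h : Lam n X, (∀ y, h.1 y = pd (f.1 y) (g.1 y)) → φ h = pd (φ f) (φ g)) ∧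
  (∀ h : Lam n X, (∀ y, h.1 y = 0) → φ h = 0)

/-- for a Boolean space `X`, each evaluation `ε_X(x) : f ↦ f(x)` is a nonzero
homomorphism `λ_n(X) → n+2`, and `ε_X : X → Λ_n(λ_n(X))` is continuous and proper. -/
theorem stmt9 (n : ℕ) {X : Type*} [TopologicalSpace X] (hX : IsBooleanSpace X) :
    ∃ E : X → {φ : Lam n X → Fin (n+2) // IsHomLam n φ ∧ ∃ f, φ f ≠ 0},
      (∀ (x : X) (f : Lam n X), (E x).1 f = f.1 x) ∧ Continuous E ∧ PreimageCompact E := by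
  classical
  obtain ⟨hT2, hbasis⟩ := hX
  -- every point admits a function in `λ_n(X)` that is nonzero at it
  have exf : ∀ x : X, ∃ f : Lam n X, f.1 x ≠ 0 := by
    intro x
    obtain ⟨U, hU, hxU, -⟩ := hbasis.exists_subset_of_mem_open (Set.mem_univ x) isOpen_univ
    obtain ⟨hUc, hUo⟩ := hU
    have hUcl : IsClosed U := hUc.isClosed
    have hclopen : IsClopen U := ⟨hUcl, hUo⟩
    have hfr : frontier U = ∅ := hclopen.frontier_eq
    have hone : (1 : Fin (n+2)) ≠ 0 := by
      simp [Fin.ext_iff]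
    refine ⟨⟨fun y => if y ∈ U then (1 : Fin (n+2)) else 0, ?_, ?_⟩, ?_⟩
    · exact Continuous.if (by simp [hfr]) continuous_const continuous_const
    · intro i hi
      by_cases h1 : i = 1
      · subst h1
        have : (fun y => if y ∈ U then (1 : Fin (n+2)) else 0) ⁻¹' {1} = U := by
          ext y; by_cases hy : y ∈ U <;> simp [hy, hone]
        rw [this]; exact hUc
      · have : (fun y => if y ∈ U then (1 : Fin (n+2)) else 0) ⁻¹' {i} = ∅ := by
          ext y; by_cases hy : y ∈ U <;> simp [hy, Ne.symm h1, Ne.symm hi]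
        rw [this]; exact isCompact_empty
    · simp [hxU, hone]
  -- evaluation is a homomorphism
  have homx : ∀ x : X, IsHomLam n (fun f : Lam n X => f.1 x) := by
    intro x
    exact ⟨fun f g h hh => hh x, fun f g h hh => hh x, fun f g h hh => hh x,
      fun h hh => hh x⟩
  set E : X → {φ : Lam n X → Fin (n+2) // IsHomLam n φ ∧ ∃ f, φ f ≠ 0} :=
    fun x => ⟨fun f => f.1 x, homx x, exf x⟩ with hE
  have hEcont : Continuous E := by
    apply Continuous.subtype_mk
    exact continuous_pi fun f => f.2.1
  refine ⟨E, fun x f => rfl, hEcont, ?_⟩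
  intro K hK
  -- `K` is closed since the codomain is Hausdorff
  have hKcl : IsClosed K := hK.isClosed
  have hEKcl : IsClosed (E ⁻¹' K) := hKcl.preimage hEcont
  -- open cover of `K` by "nonzero at f" sets
  set U : Lam n X → Set {φ : Lam n X → Fin (n+2) // IsHomLam n φ ∧ ∃ f, φ f ≠ 0} :=
    fun f => {ψ | ψ.1 f ≠ 0} with hU
  have hUopen : ∀ f, IsOpen (U f) := by
    intro f
    have hc : Continuous fun ψ : {φ : Lam n X → Fin (n+2) // IsHomLam n φ ∧ ∃ f, φ f ≠ 0} =>
        ψ.1 f := (continuous_apply f).comp continuous_subtype_val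
    exact (isOpen_discrete ({0}ᶜ : Set (Fin (n+2)))).preimage hc
  have hcov : K ⊆ ⋃ f, U f := by
    intro ψ _
    obtain ⟨f, hf⟩ := ψ.2.2
    exact Set.mem_iUnion.2 ⟨f, hf⟩
  obtain ⟨T, hT⟩ := hK.elim_finite_subcover U hUopen hcov
  -- the compact superset
  set s : Lam n X → Fin (n+2) → Set X :=
    fun f i => if i = 0 then ∅ else f.1 ⁻¹' {i} with hs
  have hscomp : ∀ f i, IsCompact (s f i) := by
    intro f i
    by_cases hi : i = 0
    · simp [hs, hi]
    · simpa [hs, hi] using f.2.2 i hi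
  set C : Set X := ⋃ f ∈ T, ⋃ i, s f i with hC
  have hCcomp : IsCompact C := by
    refine T.finite_toSet.isCompact_biUnion fun f _ => ?_
    exact isCompact_iUnion fun i => hscomp f i
  have hsub : E ⁻¹' K ⊆ C := by
    intro x hx
    have := hT hx
    rw [Set.mem_iUnion₂] at this
    obtain ⟨f, hfT, hfx⟩ := this
    have hfx' : f.1 x ≠ 0 := hfx
    refine Set.mem_biUnion hfT ?_
    refine Set.mem_iUnion.2 ⟨f.1 x, ?_⟩
    simp [hs, hfx']
  exact hCcomp.of_isClosed_subset hEKcl hsub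

end SkewPaper
end

section
/- Let n ≥ 0, let X be a Boolean space and let f, g ∈ λ_n(X). Define h : X → {0,1,…,n+1} by h(x) = f(x) if f(x) = g(x), and h(x) = 0 otherwise (equivalently, h⁻¹(i) = f⁻¹(i) ∩ g⁻¹(i) for every i ∈ {1,…,n+1}). Then h ∈ λ_n(X) and h is the greatest lower bound of f and g with respect to the natural partial order; in particular, any two elements of λ_n(X) have a greatest lower bound (λ_n(X) has finite intersections). -/
open TopologicalSpace

namespace SkewPaper

/-- The natural partial order on functions `X → {0,…,n+1}`:
`g ≤ f` iff `f∧g = g∧f = g` pointwise. -/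
def leFun (n : ℕ) {X : Type*} (g f : X → Fin (n+2)) : Prop :=
  (fun x => pw (f x) (g x)) = g ∧ (fun x => pw (g x) (f x)) = g

/-- `h(x) = f(x)` if `f(x) = g(x)` and `h(x) = 0` otherwise belongs to
`λ_n(X)` and is the greatest lower bound of `f` and `g` in the natural partial order;
in particular `λ_n(X)` has finite intersections. -/
theorem stmt17 (n : ℕ) {X : Type*} [TopologicalSpace X] (hX : IsBooleanSpace X)
    (f g : X → Fin (n+2)) (hf : MemLam n f) (hg : MemLam n g) :
    MemLam n (fun x => if f x = g x then f x else 0) ∧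
    leFun n (fun x => if f x = g x then f x else 0) f ∧
    leFun n (fun x => if f x = g x then f x else 0) g ∧
    ∀ q : X → Fin (n+2), MemLam n q → leFun n q f → leFun n q g →
      leFun n q (fun x => if f x = g x then f x else 0) := by
  haveI : T2Space X := hX.1
  set h : X → Fin (n+2) := fun x => if f x = g x then f x else 0 with hh
  have hpre : ∀ i : Fin (n+2), i ≠ 0 → h ⁻¹' {i} = f ⁻¹' {i} ∩ g ⁻¹' {i} := by
    intro i hi
    ext x
    simp only [hh, Set.mem_preimage, Set.mem_singleton_iff, Set.mem_inter_iff]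
    split_ifs with hfg
    · constructor
      · intro hx; exact ⟨hx, hfg ▸ hx⟩
      · exact fun hx => hx.1
    · constructor
      · intro hx; exact absurd hx.symm hi
      · intro hx; exact absurd (hx.1.trans hx.2.symm) hfg
  have hcont : Continuous h := by
    rw [continuous_discrete_rng]
    intro b
    by_cases hb : b = 0
    · subst hb
      have : h ⁻¹' {0} = (f ⁻¹' {0} ∩ g ⁻¹' {0}) ∪ {x | f x = g x}ᶜ := by
        ext x
        simp only [hh, Set.mem_preimage, Set.mem_singleton_iff, Set.mem_union,
          Set.mem_inter_iff, Set.mem_compl_iff, Set.mem_setOf_eq]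
        split_ifs with hfg
        · constructor
          · intro hx; exact Or.inl ⟨hx, hfg ▸ hx⟩
          · rintro (hx | hx)
            · exact hx.1
            · exact absurd hfg hx
        · simp [hfg]
      rw [this]
      exact ((hf.1.isOpen_preimage _ (isOpen_discrete _)).inter
        (hg.1.isOpen_preimage _ (isOpen_discrete _))).union
        (isClosed_eq hf.1 hg.1).isOpen_compl
    · rw [hpre b hb]
      exact (hf.1.isOpen_preimage _ (isOpen_discrete _)).inter
        (hg.1.isOpen_preimage _ (isOpen_discrete _))
  have hmem : MemLam n h := by
    refine ⟨hcont, fun i hi => ?_⟩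
    rw [hpre i hi]
    exact (hf.2 i hi).inter_right (hg.2 i hi).isClosed
  refine ⟨hmem, ?_, ?_, ?_⟩
  · constructor <;> funext x <;> simp only [hh, pw] <;> split_ifs <;> tauto
  · constructor <;> funext x <;> simp only [hh, pw] <;> split_ifs with h1 h2 <;>
      first | rfl | (try simp_all) <;> tauto
  · intro q _ hqf hqg
    have hf1 : ∀ x, q x ≠ 0 → f x = q x := by
      intro x hx
      have := congrFun hqf.1 x
      simp only [pw] at this
      split_ifs at this with h1
      · exact absurd this.symm hx
      · push_neg at h1; exact this
    have hg1 : ∀ x, q x ≠ 0 → g x = q x := by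
      intro x hx
      have := congrFun hqg.1 x
      simp only [pw] at this
      split_ifs at this with h1
      · exact absurd this.symm hx
      · push_neg at h1; exact this
    constructor <;> funext x <;> simp only [hh, pw] <;> by_cases hq : q x = 0
    · simp [hq]
    · have hfg : f x = g x := (hf1 x hq).trans (hg1 x hq).symm
      simp [hfg, hg1 x hq, hq]
    · simp [hq]
    · have hfg : f x = g x := (hf1 x hq).trans (hg1 x hq).symm
      simp [hfg, hg1 x hq, hq]

end SkewPaper
end

section
/- Let n ≥ 0, let X be a Boolean space, let x ∈ X, let i ∈ {1,…,n+1}, and let f ∈ λ_n(X) satisfy f(x) = i. Then {g ∈ λ_n(X) : g(x) = i} = {g ∈ λ_n(X) : there exists c ∈ λ_n(X) with c ≤ f, c ≤ g and c(x) ≠ 0} (i.e. the set N_{x,i} = {g ∈ λ_n(X) : g(x) = i} coincides with the set X_{f,N_x}, and is thus an ultrafilter of λ_n(X)). -/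
open TopologicalSpace

namespace SkewPaper

/-- for `x ∈ X`, `i ∈ {1,…,n+1}` and `f ∈ λ_n(X)` with `f(x) = i`, the set
`N_{x,i} = {g ∈ λ_n(X) : g(x) = i}` coincides with
`X_{f,N_x} = {g ∈ λ_n(X) : ∃ c ∈ λ_n(X), c ≤ f, c ≤ g, c(x) ≠ 0}`. -/
theorem stmt18 (n : ℕ) {X : Type*} [TopologicalSpace X] (hX : IsBooleanSpace X)
    (x : X) (i : Fin (n+2)) (hi : i ≠ 0) (f : X → Fin (n+2)) (hf : MemLam n f)
    (hfx : f x = i) :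
    {g : X → Fin (n+2) | MemLam n g ∧ g x = i} =
      {g : X → Fin (n+2) | MemLam n g ∧
        ∃ c : X → Fin (n+2), MemLam n c ∧ leFun n c f ∧ leFun n c g ∧ c x ≠ 0} := by
  ext g
  simp only [Set.mem_setOf_eq]
  constructor
  · rintro ⟨hg, hgx⟩
    refine ⟨hg, ?_⟩
    -- find a compact open V with x ∈ V ⊆ f⁻¹{i} ∩ g⁻¹{i}
    haveI : T2Space X := hX.1
    have hopen : IsOpen (f ⁻¹' {i} ∩ g ⁻¹' {i}) := by
      exact (hf.1.isOpen_preimage _ (isOpen_discrete _)).inter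
        (hg.1.isOpen_preimage _ (isOpen_discrete _))
    have hxmem : x ∈ f ⁻¹' {i} ∩ g ⁻¹' {i} := ⟨hfx, hgx⟩
    obtain ⟨V, ⟨hVc, hVo⟩, hxV, hVsub⟩ :=
      hX.2.exists_subset_of_mem_open hxmem hopen
    classical
    set c : X → Fin (n+2) := fun y => if y ∈ V then i else 0 with hc
    have hcpre : ∀ s : Set (Fin (n+2)),
        c ⁻¹' s = (if i ∈ s then V else ∅) ∪ (if (0 : Fin (n+2)) ∈ s then Vᶜ else ∅) := by
      intro s
      ext y
      by_cases hy : y ∈ V <;> simp only [Set.mem_preimage, hc, Set.mem_union] <;>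
        split_ifs <;> simp_all [hy]
    have hVclosed : IsClosed V := hVc.isClosed
    have hccont : Continuous c := by
      apply IsLocallyConstant.continuous
      intro s
      rw [hcpre s]
      split_ifs <;>
        simp [hVo, hVclosed.isOpen_compl, isOpen_empty, IsOpen.union]
    have hfV : ∀ y ∈ V, f y = i := fun y hy => (hVsub hy).1
    have hgV : ∀ y ∈ V, g y = i := fun y hy => (hVsub hy).2
    refine ⟨c, ⟨hccont, ?_⟩, ?_, ?_, ?_⟩
    · intro j hj
      have h0 : (0 : Fin (n+2)) ∉ ({j} : Set (Fin (n+2))) :=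
        fun h => hj (Set.mem_singleton_iff.mp h).symm
      rw [hcpre {j}, if_neg h0, Set.union_empty]
      split_ifs
      · exact hVc
      · exact isCompact_empty
    · constructor <;> funext y <;> by_cases hy : y ∈ V <;>
        simp [hc, hy, pw, hi, hfV y]
    · constructor <;> funext y <;> by_cases hy : y ∈ V <;>
        simp [hc, hy, pw, hi, hgV y]
    · simp [hc, hxV, hi]
  · rintro ⟨hg, c, hc, hcf, hcg, hcx⟩
    refine ⟨hg, ?_⟩
    have h1 := congrFun hcf.1 x
    have h2 := congrFun hcg.1 x
    simp only [pw] at h1 h2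
    have hfx0 : f x ≠ 0 := by
      intro h; rw [if_pos (Or.inl h)] at h1; exact hcx h1.symm
    have hgx0 : g x ≠ 0 := by
      intro h; rw [if_pos (Or.inl h)] at h2; exact hcx h2.symm
    rw [if_neg (by push_neg; exact ⟨hfx0, hcx⟩)] at h1
    rw [if_neg (by push_neg; exact ⟨hgx0, hcx⟩)] at h2
    rw [h2, ← h1, hfx]


end SkewPaper
end

section
/- Let n ≥ 0 and let g : X₁ → X₂ be a continuous proper map of topological spaces. Then for every f ∈ λ_n(X₂) the composite f∘g belongs to λ_n(X₁), and the map λ_n(g) : λ_n(X₂) → λ_n(X₁), f ↦ f∘g, preserves the pointwise operations ∧, ∨, \ and 0. If moreover X₁ and X₂ are Boolean spaces, then λ_n(g) is a proper homomorphism: for every h ∈ λ_n(X₁) there exists f ∈ λ_n(X₂) with h ∧ (f∘g) = h. -/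
open TopologicalSpace

namespace SkewPaper

lemma exists_compact_open_superset {X : Type*} [TopologicalSpace X]
    (hB : IsTopologicalBasis {U : Set X | IsCompact U ∧ IsOpen U})
    {K : Set X} (hK : IsCompact K) :
    ∃ U : Set X, IsCompact U ∧ IsOpen U ∧ K ⊆ U := by
  obtain ⟨t, ht⟩ := hK.elim_finite_subcover
    (fun V : {V : Set X // IsCompact V ∧ IsOpen V} => V.1) (fun V => V.2.2)
    (by
      intro x _
      obtain ⟨V, hV, hxV, -⟩ := hB.exists_subset_of_mem_open (Set.mem_univ x) isOpen_univ
      exact Set.mem_iUnion.2 ⟨⟨V, hV⟩, hxV⟩)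
  refine ⟨⋃ V ∈ t, V.1, t.isCompact_biUnion (fun V _ => V.2.1),
    isOpen_biUnion (fun V _ => V.2.2), ht⟩

/-- a continuous proper map `g : X₁ → X₂` induces, by `f ↦ f∘g`, a map
`λ_n(g) : λ_n(X₂) → λ_n(X₁)` preserving the pointwise operations `∧`, `∨`, `\` and `0`;
if moreover `X₁` and `X₂` are Boolean spaces, this homomorphism is proper. -/
theorem stmt19 (n : ℕ) {X₁ X₂ : Type*} [TopologicalSpace X₁] [TopologicalSpace X₂]
    (g : X₁ → X₂) (hgc : Continuous g) (hgp : PreimageCompact g) :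
    (∀ f : X₂ → Fin (n+2), MemLam n f → MemLam n (f ∘ g)) ∧
    (∀ f f' : X₂ → Fin (n+2),
      (fun x => pw (f x) (f' x)) ∘ g = fun x => pw ((f ∘ g) x) ((f' ∘ g) x)) ∧
    (∀ f f' : X₂ → Fin (n+2),
      (fun x => pv (f x) (f' x)) ∘ g = fun x => pv ((f ∘ g) x) ((f' ∘ g) x)) ∧
    (∀ f f' : X₂ → Fin (n+2),
      (fun x => pd (f x) (f' x)) ∘ g = fun x => pd ((f ∘ g) x) ((f' ∘ g) x)) ∧
    ((fun _ : X₂ => (0 : Fin (n+2))) ∘ g = fun _ => (0 : Fin (n+2))) ∧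
    (IsBooleanSpace X₁ → IsBooleanSpace X₂ →
      ∀ h : X₁ → Fin (n+2), MemLam n h →
        ∃ f : X₂ → Fin (n+2), MemLam n f ∧ (fun x => pw (h x) (f (g x))) = h) := by
  classical
  refine ⟨?_, fun f f' => rfl, fun f f' => rfl, fun f f' => rfl, rfl, ?_⟩
  · rintro f ⟨hfc, hfk⟩
    exact ⟨hfc.comp hgc, fun i hi => hgp _ (hfk i hi)⟩
  · rintro hX₁ ⟨hT2, hB⟩ h ⟨hhc, hhk⟩
    -- the support of h is compact
    have hKc : IsCompact (h ⁻¹' {0}ᶜ) := by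
      have : h ⁻¹' {0}ᶜ = ⋃ i : {i : Fin (n+2) // i ≠ 0}, h ⁻¹' {i.1} := by
        ext x
        simp [Set.mem_iUnion]
      rw [this]
      exact isCompact_iUnion fun i => hhk i.1 i.2
    have hgKc : IsCompact (g '' (h ⁻¹' {0}ᶜ)) := hKc.image hgc
    obtain ⟨U, hUc, hUo, hUsub⟩ := exists_compact_open_superset hB hgKc
    have hUcl : IsClosed U := hUc.isClosed
    refine ⟨fun x => if x ∈ U then (1 : Fin (n+2)) else 0, ⟨?_, ?_⟩, ?_⟩
    · rw [continuous_discrete_rng]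
      intro b
      by_cases h1 : b = 1
      · subst h1
        have : (fun x => if x ∈ U then (1 : Fin (n+2)) else 0) ⁻¹' {1} = U := by
          ext x; by_cases hx : x ∈ U <;> simp [hx]
        rw [this]; exact hUo
      · by_cases h0 : b = 0
        · subst h0
          have : (fun x => if x ∈ U then (1 : Fin (n+2)) else 0) ⁻¹' {0} = Uᶜ := by
            ext x; by_cases hx : x ∈ U <;> simp [hx]
          rw [this]; exact hUcl.isOpen_compl
        · have : (fun x => if x ∈ U then (1 : Fin (n+2)) else 0) ⁻¹' {b} = ∅ := by
            ext x; by_cases hx : x ∈ U <;> simp [hx, Ne.symm h0, Ne.symm h1]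
          rw [this]; exact isOpen_empty
    · intro i hi
      by_cases h1 : i = 1
      · subst h1
        have : (fun x => if x ∈ U then (1 : Fin (n+2)) else 0) ⁻¹' {1} = U := by
          ext x; by_cases hx : x ∈ U <;> simp [hx]
        rw [this]; exact hUc
      · have : (fun x => if x ∈ U then (1 : Fin (n+2)) else 0) ⁻¹' {i} = ∅ := by
          ext x; by_cases hx : x ∈ U <;> simp [hx, Ne.symm hi, Ne.symm h1]
        rw [this]; exact isCompact_empty
    · funext x
      by_cases hx : h x = 0
      · simp [pw, hx]
      · have hmem : g x ∈ U := hUsub ⟨x, hx, rfl⟩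
        simp [pw, hx, hmem]


end SkewPaper
end
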